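/- arXiv:1304.5709 — 6 statements merged into one kernel-verified Lean document; each statement's English description precedes it below -/
import Mathlib

section
/- Let n ≥ 1 and let A, B be invertible symmetric (n+1)×(n+1) complex matrices. Then the following are equivalent: (i) for every nonzero x ∈ ℂ^{n+1} with xᵀAx = 0 and xᵀBx = 0, the vectors Ax and Bx are linearly independent over ℂ (i.e. the pair of smooth quadrics {Q_A, Q_B} in P^n has normal crossings); (ii) the polynomial t ↦ det(A − t·B) has exactly n+1 distinct roots in ℂ (i.e. the pencil of quadrics generated by Q_A and Q_B contains n+1 distinct singular quadrics). -/
/-!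
Put `M = B⁻¹ * A`. It is self-adjoint for the nondegenerate form `β x y = xᵀ B y`, the singular
members of the pencil are its eigenvalues, and normal crossings fails exactly when `M` has a
`β`-isotropic eigenvector (`A x = μ • B x` with `xᵀ B x = 0`). Counting roots of the
characteristic polynomial, `M` has `n + 1` eigenvalues iff every generalized eigenspace has
dimension at most one.

If a generalized eigenspace has dimension at least two, then either the eigenspace does, and a
quadratic form on a plane over an algebraically closed field has a nonzero zero, or there is a
Jordan chain `(M - μ)² y = 0 ≠ (M - μ) y`, and `x = (M - μ) y` is an isotropic eigenvector because
`β x x = β y ((M - μ)² y)`. Conversely, if no generalized eigenspace exceeds a line, the eigenspaces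
span the space and are `β`-orthogonal to each other, so an isotropic eigenvector would be
`β`-orthogonal to everything.
-/

open Matrix Module Module.End Polynomial

variable {K V : Type*} [Field K] [AddCommGroup V] [Module K V]

namespace Module.End

theorem setOf_hasEigenvalue_eq_roots_charpoly [FiniteDimensional K V] [DecidableEq K]
    (f : End K V) : {μ | f.HasEigenvalue μ} = ↑f.charpoly.roots.toFinset := by
  ext μ
  simp [hasEigenvalue_iff_isRoot_charpoly, f.charpoly_monic.ne_zero]

theorem ncard_hasEigenvalue_eq_finrank_iff [IsAlgClosed K] [FiniteDimensional K V]
    (f : End K V) :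
    {μ | f.HasEigenvalue μ}.ncard = finrank K V ↔
      ∀ μ, finrank K (f.maxGenEigenspace μ) ≤ 1 := by
  classical
  rw [setOf_hasEigenvalue_eq_roots_charpoly, Set.ncard_coe_finset, ← f.charpoly_natDegree,
    ← IsAlgClosed.card_roots_eq_natDegree, Multiset.toFinset_card_eq_card_iff_nodup,
    Multiset.nodup_iff_count_le_one]
  simp only [count_roots, LinearMap.finrank_maxGenEigenspace_eq]

theorem eigenspace_eq_maxGenEigenspace_of_finrank_le_one [FiniteDimensional K V]
    {f : End K V} {μ : K} (h : finrank K (f.maxGenEigenspace μ) ≤ 1) :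
    f.eigenspace μ = f.maxGenEigenspace μ := by
  by_cases hμ : f.HasEigenvalue μ
  · refine Submodule.eq_of_le_of_finrank_le eigenspace_le_maxGenEigenspace (h.trans ?_)
    exact Submodule.one_le_finrank_iff.mpr hμ
  · have hbot : f.maxGenEigenspace μ = ⊥ := by
      by_contra hne
      exact hμ ((hasUnifEigenvalue_iff_hasUnifEigenvalue_one (k := ⊤) ENat.top_pos).mp hne)
    rw [hbot, eq_bot_iff]
    exact hbot ▸ eigenspace_le_maxGenEigenspace

theorem iSup_eigenspace_eq_top_of_finrank_maxGenEigenspace_le_one [IsAlgClosed K]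
    [FiniteDimensional K V] {f : End K V} (h : ∀ μ, finrank K (f.maxGenEigenspace μ) ≤ 1) :
    ⨆ μ, f.eigenspace μ = ⊤ := by
  simpa only [eigenspace_eq_maxGenEigenspace_of_finrank_le_one (h _)] using
    iSup_maxGenEigenspace_eq_top f

theorem exists_sub_smul_apply_ne_zero_of_eigenspace_ne {f : End K V} {μ : K}
    (h : f.eigenspace μ ≠ f.maxGenEigenspace μ) :
    ∃ y, (f - μ • 1) ((f - μ • 1) y) = 0 ∧ (f - μ • 1) y ≠ 0 := by
  by_contra! hsq
  have hpow (k : ℕ) (y : V) (hk : ((f - μ • 1) ^ k) y = 0) : (f - μ • 1) y = 0 := by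
    induction k generalizing y with
    | zero => simp_all
    | succ k ih =>
      rw [pow_succ, Module.End.mul_apply] at hk
      exact hsq y (ih _ hk)
  refine h (le_antisymm eigenspace_le_maxGenEigenspace fun y hy ↦ ?_)
  obtain ⟨k, hk⟩ := (mem_maxGenEigenspace f μ y).mp hy
  rw [eigenspace_def, LinearMap.mem_ker]
  exact hpow k y hk

end Module.End

theorem LinearMap.BilinForm.exists_ne_zero_apply_self_eq_zero [IsAlgClosed K]
    (β : LinearMap.BilinForm K V) (h : 1 < finrank K V) : ∃ x, x ≠ 0 ∧ β x x = 0 := by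
  have : Nontrivial V := Module.nontrivial_of_finrank_pos (zero_lt_one.trans h)
  by_contra! hβ
  obtain ⟨v, hv⟩ := exists_ne (0 : V)
  obtain ⟨u, huv⟩ := exists_linearIndependent_pair_of_one_lt_finrank h hv
  obtain ⟨t, ht⟩ :=
    IsAlgClosed.exists_root (C (β v v) * X ^ 2 + C (β u v + β v u) * X + C (β u u))
      (by rw [degree_quadratic (hβ v hv)]; decide)
  refine hβ (t • v + u) (fun h0 ↦ ?_) ?_
  · exact one_ne_zero (LinearIndependent.pair_iff.mp huv t 1 (by rwa [one_smul])).2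
  · simp only [IsRoot, eval_add, eval_mul, eval_C, eval_pow, eval_X] at ht
    simp only [map_add, map_smul, LinearMap.add_apply, LinearMap.smul_apply, smul_eq_mul]
    linear_combination ht

theorem LinearMap.BilinForm.exists_mem_ne_zero_apply_self_eq_zero [IsAlgClosed K]
    (β : LinearMap.BilinForm K V) {E : Submodule K V} (h : 1 < finrank K E) :
    ∃ x ∈ E, x ≠ 0 ∧ β x x = 0 := by
  obtain ⟨x, hx0, hx⟩ := (β.restrict E).exists_ne_zero_apply_self_eq_zero h
  exact ⟨x, x.2, by simpa using hx0, hx⟩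

namespace LinearMap.IsAdjointPair

variable {β : LinearMap.BilinForm K V} {f : End K V}

theorem apply_eq_zero_of_mem_eigenspace (hf : IsAdjointPair β β f f) {μ ν : K} (hμν : μ ≠ ν)
    {x y : V} (hx : x ∈ f.eigenspace μ) (hy : y ∈ f.eigenspace ν) : β x y = 0 := by
  have h := hf x y
  rw [mem_eigenspace_iff.mp hx, mem_eigenspace_iff.mp hy, map_smul, map_smul,
    LinearMap.smul_apply, smul_eq_mul, smul_eq_mul] at h
  exact (mul_eq_zero.mp (by linear_combination h : (μ - ν) * β x y = 0)).resolve_left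
    (sub_ne_zero.mpr hμν)

theorem apply_sub_smul_self (hf : IsAdjointPair β β f f) (μ : K) (y : V) :
    β ((f - μ • 1) y) ((f - μ • 1) y) = β y ((f - μ • 1) ((f - μ • 1) y)) :=
  (hf.sub (isAdjointPair_one.smul μ)) y _

theorem forall_finrank_maxGenEigenspace_le_one_iff [IsAlgClosed K] [FiniteDimensional K V]
    (hβ : β.SeparatingLeft)
    (hf : IsAdjointPair β β f f) :
    (∀ μ, finrank K (f.maxGenEigenspace μ) ≤ 1) ↔ ∀ μ x, f.HasEigenvector μ x → β x x ≠ 0 := by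
  constructor
  · intro h μ x ⟨hxμ, hx0⟩ hxx
    refine hx0 (hβ x fun y ↦ ?_)
    have hspan : f.eigenspace μ = K ∙ x := by
      refine (Submodule.eq_of_le_of_finrank_le ?_ ?_).symm
      · exact (Submodule.span_singleton_le_iff_mem _ _).mpr hxμ
      · rw [finrank_span_singleton hx0, eigenspace_eq_maxGenEigenspace_of_finrank_le_one (h μ)]
        exact h μ
    have hker : ⨆ ν, f.eigenspace ν ≤ LinearMap.ker (β x) := by
      refine iSup_le fun ν z hz ↦ ?_
      rcases eq_or_ne μ ν with rfl | hμν
      · obtain ⟨c, rfl⟩ := Submodule.mem_span_singleton.mp (hspan ▸ hz)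
        simp [hxx]
      · exact hf.apply_eq_zero_of_mem_eigenspace hμν hxμ hz
    exact hker ((iSup_eigenspace_eq_top_of_finrank_maxGenEigenspace_le_one h).symm ▸
      Submodule.mem_top)
  · intro h μ
    by_contra! hμ
    by_cases he : f.eigenspace μ = f.maxGenEigenspace μ
    · obtain ⟨x, hxμ, hx0, hxx⟩ := β.exists_mem_ne_zero_apply_self_eq_zero (he ▸ hμ)
      exact h μ x ⟨hxμ, hx0⟩ hxx
    · obtain ⟨y, hy2, hy1⟩ := exists_sub_smul_apply_ne_zero_of_eigenspace_ne he
      refine h μ _ ⟨?_, hy1⟩ ?_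
      · rwa [← LinearMap.mem_ker, ← eigenspace_def] at hy2
      · rw [hf.apply_sub_smul_self, hy2, map_zero]

theorem ncard_hasEigenvalue_eq_finrank_iff [IsAlgClosed K] [FiniteDimensional K V]
    (hβ : β.SeparatingLeft) (hf : IsAdjointPair β β f f) :
    {μ | f.HasEigenvalue μ}.ncard = finrank K V ↔ ∀ μ x, f.HasEigenvector μ x → β x x ≠ 0 :=
  (f.ncard_hasEigenvalue_eq_finrank_iff).trans (forall_finrank_maxGenEigenspace_le_one_iff hβ hf)

end LinearMap.IsAdjointPair

namespace Matrix

variable {n : Type*} [Fintype n] [DecidableEq n] {A B : Matrix n n K}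

theorem hasEigenvalue_toLin'_iff_det_sub_smul_eq_zero (M : Matrix n n K) (μ : K) :
    HasEigenvalue (toLin' M) μ ↔ (M - μ • 1).det = 0 := by
  have hlin : toLin' (M - μ • 1) = toLin' M - μ • 1 := by
    rw [map_sub, map_smul, toLin'_one, Module.End.one_eq_id]
  rw [hasEigenvalue_iff, eigenspace_def, ← LinearMap.det_eq_zero_iff_ker_ne_bot, ← hlin,
    LinearMap.det_toLin']

theorem setOf_det_sub_smul_eq_zero (hB : IsUnit B.det) :
    {t | (A - t • B).det = 0} = {μ | HasEigenvalue (toLin' (B⁻¹ * A)) μ} := by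
  ext t
  have hfactor : A - t • B = B * (B⁻¹ * A - t • 1) := by
    rw [Matrix.mul_sub, mul_nonsing_inv_cancel_left B _ hB, Matrix.mul_smul, mul_one]
  rw [Set.mem_ofPred_eq, Set.mem_ofPred_eq, hasEigenvalue_toLin'_iff_det_sub_smul_eq_zero,
    hfactor, det_mul, mul_eq_zero, or_iff_right hB.ne_zero]

theorem linearIndependent_mulVec_pair_iff (hB : IsUnit B.det) {x : n → K} (hx : x ≠ 0) :
    LinearIndependent K ![A *ᵥ x, B *ᵥ x] ↔ ∀ μ : K, (B⁻¹ * A) *ᵥ x ≠ μ • x := by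
  have hBinj := mulVec_injective_of_isUnit ((isUnit_iff_isUnit_det B).mpr hB)
  rw [LinearIndependent.pair_symm_iff,
    LinearIndependent.pair_iff' ((hBinj.ne_iff' (mulVec_zero B)).mpr hx)]
  refine forall_congr' fun μ ↦ not_congr ?_
  rw [← hBinj.eq_iff (a := (B⁻¹ * A) *ᵥ x), mulVec_mulVec, mul_nonsing_inv_cancel_left B _ hB,
    mulVec_smul, eq_comm]

theorem isAdjointPair_nonsing_inv_mul (hAs : A.IsSymm) (hBs : B.IsSymm) (hB : IsUnit B.det) :
    LinearMap.IsAdjointPair (toLinearMap₂' K B) (toLinearMap₂' K B)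
      (toLin' (B⁻¹ * A)) (toLin' (B⁻¹ * A)) := by
  rw [isAdjointPair_toLinearMap₂', Matrix.IsAdjointPair, transpose_mul, transpose_nonsing_inv,
    hAs.eq, hBs.eq, Matrix.mul_assoc, nonsing_inv_mul B hB, mul_one,
    mul_nonsing_inv_cancel_left B _ hB]

theorem forall_linearIndependent_mulVec_pair_iff (hB : IsUnit B.det) :
    (∀ x : n → K, x ≠ 0 → x ⬝ᵥ (A *ᵥ x) = 0 → x ⬝ᵥ (B *ᵥ x) = 0 →
      LinearIndependent K ![A *ᵥ x, B *ᵥ x]) ↔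
    ∀ μ x, HasEigenvector (toLin' (B⁻¹ * A)) μ x → toLinearMap₂' K B x x ≠ 0 := by
  simp only [hasEigenvector_iff, mem_eigenspace_iff, toLin'_apply, toLinearMap₂'_apply']
  constructor
  · rintro hNC μ x ⟨hMx, hx0⟩ hxx
    have hxA : x ⬝ᵥ (A *ᵥ x) = 0 := by
      rw [← mul_nonsing_inv_cancel_left B A hB, ← mulVec_mulVec, hMx, mulVec_smul,
        dotProduct_smul, hxx, smul_zero]
    exact (linearIndependent_mulVec_pair_iff hB hx0).mp (hNC x hx0 hxA hxx) μ hMx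
  · intro h x hx0 _ hxx
    exact (linearIndependent_mulVec_pair_iff hB hx0).mpr fun μ hMx ↦ h μ x ⟨hMx, hx0⟩ hxx

end Matrix

theorem normal_crossings_iff_pencil_has_n_plus_one_singular_members_general
    (n : ℕ) (A B : Matrix (Fin (n+1)) (Fin (n+1)) ℂ)
    (hAs : A.IsSymm) (hBs : B.IsSymm) (hB : IsUnit B.det) :
    (∀ x : Fin (n+1) → ℂ, x ≠ 0 → x ⬝ᵥ (A *ᵥ x) = 0 → x ⬝ᵥ (B *ᵥ x) = 0 →
      LinearIndependent ℂ ![A *ᵥ x, B *ᵥ x]) ↔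
    {t : ℂ | (A - t • B).det = 0}.ncard = n + 1 := by
  have hsep : (toLinearMap₂' ℂ B).SeparatingLeft :=
    (nondegenerate_toLinearMap₂'_iff.mpr (nondegenerate_iff_det_ne_zero.mpr hB.ne_zero)).1
  have hcount := (isAdjointPair_nonsing_inv_mul hAs hBs hB).ncard_hasEigenvalue_eq_finrank_iff hsep
  rw [Module.finrank_fin_fun] at hcount
  rw [forall_linearIndependent_mulVec_pair_iff hB, setOf_det_sub_smul_eq_zero hB, hcount]

/-- For `n ≥ 1` and invertible symmetric complex `(n+1)×(n+1)` matrices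
`A`, `B`, the pair of smooth quadrics `{Q_A, Q_B}` in `P^n` has normal crossings (Jacobian
criterion) iff the pencil contains exactly `n+1` distinct singular quadrics, i.e. the
polynomial `t ↦ det (A - t • B)` has exactly `n+1` distinct roots. -/
theorem normal_crossings_iff_pencil_has_n_plus_one_singular_members
    (n : ℕ) (hn : 1 ≤ n) (A B : Matrix (Fin (n+1)) (Fin (n+1)) ℂ)
    (hAs : A.IsSymm) (hBs : B.IsSymm) (hA : IsUnit A.det) (hB : IsUnit B.det) :
    (∀ x : Fin (n+1) → ℂ, x ≠ 0 → x ⬝ᵥ (A *ᵥ x) = 0 → x ⬝ᵥ (B *ᵥ x) = 0 →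
      LinearIndependent ℂ ![A *ᵥ x, B *ᵥ x]) ↔
    {t : ℂ | (A - t • B).det = 0}.ncard = n + 1 :=
  normal_crossings_iff_pencil_has_n_plus_one_singular_members_general n A B hAs hBs hB
end

section
/- Let A, B be invertible symmetric (n+1)×(n+1) complex matrices such that the polynomial t ↦ det(A − t·B) has n+1 distinct roots λ₀, …, λₙ ∈ ℂ, and for each i let vᵢ ∈ ℂ^{n+1} be a nonzero vector with (A − λᵢB)vᵢ = 0. Then (v₀, …, vₙ) is a basis of ℂ^{n+1}; moreover vᵢᵀAv_j = 0 and vᵢᵀBv_j = 0 for all i ≠ j, and vᵢᵀBvᵢ ≠ 0 and vᵢᵀAvᵢ ≠ 0 for all i. Consequently, if P is the matrix whose columns are v₀, …, vₙ, then P is invertible and both PᵀAP and PᵀBP are diagonal matrices with nonzero diagonal entries, i.e. the two quadrics are simultaneously diagonalized in the frame given by the singular points v₀, …, vₙ of the pencil. -/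
/-!
Rewriting `(A - λᵢ B) vᵢ = 0` as `A⁻¹ B vᵢ = λᵢ⁻¹ vᵢ` (where `λᵢ ≠ 0` because `A` is invertible)
makes the `vᵢ` eigenvectors for distinct eigenvalues, hence a basis. For `i ≠ j`, symmetry of
`A` and `B` gives `λⱼ vᵢᵀBvⱼ = vᵢᵀAvⱼ = vⱼᵀAvᵢ = λᵢ vᵢᵀBvⱼ`, so `vᵢᵀBvⱼ = vᵢᵀAvⱼ = 0`.
If also `vᵢᵀBvᵢ = 0`, then `Bvᵢ` pairs to zero with the whole basis, so `Bvᵢ = 0`,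
hence `Avᵢ = λᵢ Bvᵢ = 0`, contradicting invertibility of `A`.
-/

open Matrix

section

variable {R K n : Type*} [Fintype n]

theorem Matrix.IsSymm.dotProduct_mulVec_comm [CommSemiring R] {A : Matrix n n R} (hA : A.IsSymm)
    (v w : n → R) : v ⬝ᵥ A *ᵥ w = w ⬝ᵥ A *ᵥ v := by
  rw [dotProduct_mulVec, ← vecMul_transpose, hA.eq, dotProduct_comm]

theorem Matrix.transpose_mul_mul_apply_of_cols [NonUnitalSemiring R] (v : n → n → R)
    (M : Matrix n n R) (i j : n) :
    ((of fun i j => v j i)ᵀ * M * of fun i j => v j i) i j = v i ⬝ᵥ M *ᵥ v j := by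
  rw [Matrix.mul_assoc, mul_apply']
  rfl

variable [Field K] {A B : Matrix n n K} {μ ν : K} {v w : n → K}

theorem dotProduct_mulVec_eq_zero_of_ne (hAs : A.IsSymm) (hBs : B.IsSymm)
    (hAv : A *ᵥ v = μ • B *ᵥ v) (hAw : A *ᵥ w = ν • B *ᵥ w) (hμν : μ ≠ ν) :
    v ⬝ᵥ B *ᵥ w = 0 := by
  have h : ν * (v ⬝ᵥ B *ᵥ w) = μ * (v ⬝ᵥ B *ᵥ w) :=
    calc ν * (v ⬝ᵥ B *ᵥ w) = v ⬝ᵥ A *ᵥ w := by rw [hAw, dotProduct_smul, smul_eq_mul]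
      _ = w ⬝ᵥ A *ᵥ v := hAs.dotProduct_mulVec_comm v w
      _ = μ * (v ⬝ᵥ B *ᵥ w) := by
        rw [hAv, dotProduct_smul, smul_eq_mul, hBs.dotProduct_mulVec_comm]
  by_contra hvw
  exact hμν (mul_right_cancel₀ hvw h).symm

variable [DecidableEq n]

theorem Matrix.eq_zero_of_forall_dotProduct_eq_zero {v : n → n → K}
    (hv : LinearIndependent K v) {y : n → K} (hy : ∀ j, v j ⬝ᵥ y = 0) : y = 0 :=
  mulVec_injective_iff_isUnit.2 (linearIndependent_rows_iff_isUnit.1 hv)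
    (by ext j; simpa [mulVec] using hy j)

theorem ne_zero_of_mulVec_eq_smul_mulVec (hA : IsUnit A.det) (hv : v ≠ 0)
    (hAv : A *ᵥ v = μ • B *ᵥ v) : μ ≠ 0 := by
  rintro rfl
  exact hv (eq_zero_of_mulVec_eq_zero hA.ne_zero (by rw [hAv, zero_smul]))

theorem inv_mul_mulVec_of_mulVec_eq_smul_mulVec (hA : IsUnit A.det) (hμ : μ ≠ 0)
    (hAv : A *ᵥ v = μ • B *ᵥ v) : (A⁻¹ * B) *ᵥ v = μ⁻¹ • v := by
  rw [← mulVec_mulVec, eq_inv_smul_iff₀ hμ, ← mulVec_smul, ← hAv, mulVec_mulVec,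
    nonsing_inv_mul A hA, one_mulVec]

theorem linearIndependent_of_mulVec_eq_smul_mulVec {ι : Type*} {lam : ι → K} {v : ι → n → K}
    (hA : IsUnit A.det) (hinj : Function.Injective lam) (hv0 : ∀ i, v i ≠ 0)
    (hAv : ∀ i, A *ᵥ v i = lam i • B *ᵥ v i) : LinearIndependent K v := by
  refine Module.End.eigenvectors_linearIndependent' (A⁻¹ * B).mulVecLin (fun i => (lam i)⁻¹)
    (inv_injective.comp hinj) v fun i => ⟨?_, hv0 i⟩
  rw [Module.End.mem_eigenspace_iff, mulVecLin_apply]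
  exact inv_mul_mulVec_of_mulVec_eq_smul_mulVec hA
    (ne_zero_of_mulVec_eq_smul_mulVec hA (hv0 i) (hAv i)) (hAv i)

theorem dotProduct_mulVec_self_ne_zero {lam : n → K} {v : n → n → K}
    (hAs : A.IsSymm) (hBs : B.IsSymm) (hA : IsUnit A.det) (hinj : Function.Injective lam)
    (hv0 : ∀ i, v i ≠ 0) (hAv : ∀ i, A *ᵥ v i = lam i • B *ᵥ v i) (i : n) :
    v i ⬝ᵥ B *ᵥ v i ≠ 0 := by
  intro hii
  have hBv : B *ᵥ v i = 0 := by
    refine eq_zero_of_forall_dotProduct_eq_zero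
      (linearIndependent_of_mulVec_eq_smul_mulVec hA hinj hv0 hAv) fun j => ?_
    rcases eq_or_ne j i with rfl | hji
    · exact hii
    · exact dotProduct_mulVec_eq_zero_of_ne hAs hBs (hAv j) (hAv i) (hinj.ne hji)
  exact hv0 i (eq_zero_of_mulVec_eq_zero hA.ne_zero (by rw [hAv i, hBv, smul_zero]))

end

theorem simultaneous_diagonalization_general
    (n : ℕ) (A B : Matrix (Fin (n+1)) (Fin (n+1)) ℂ)
    (hAs : A.IsSymm) (hBs : B.IsSymm) (hA : IsUnit A.det)
    (lam : Fin (n+1) → ℂ) (hinj : Function.Injective lam)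
    (v : Fin (n+1) → Fin (n+1) → ℂ) (hv0 : ∀ i, v i ≠ 0)
    (hv : ∀ i, (A - lam i • B) *ᵥ v i = 0) :
    LinearIndependent ℂ v ∧ Submodule.span ℂ (Set.range v) = ⊤ ∧
    (∀ i j, i ≠ j → v i ⬝ᵥ (A *ᵥ v j) = 0 ∧ v i ⬝ᵥ (B *ᵥ v j) = 0) ∧
    (∀ i, v i ⬝ᵥ (A *ᵥ v i) ≠ 0 ∧ v i ⬝ᵥ (B *ᵥ v i) ≠ 0) ∧
    IsUnit (Matrix.of fun i j => v j i).det ∧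
    ((Matrix.of fun i j => v j i)ᵀ * A * (Matrix.of fun i j => v j i)).IsDiag ∧
    ((Matrix.of fun i j => v j i)ᵀ * B * (Matrix.of fun i j => v j i)).IsDiag ∧
    (∀ i, ((Matrix.of fun i' j => v j i')ᵀ * A * (Matrix.of fun i' j => v j i')) i i ≠ 0) ∧
    (∀ i, ((Matrix.of fun i' j => v j i')ᵀ * B * (Matrix.of fun i' j => v j i')) i i ≠ 0) := by
  have hAv : ∀ i, A *ᵥ v i = lam i • B *ᵥ v i := fun i => by
    rw [← sub_eq_zero, ← smul_mulVec, ← sub_mulVec, hv i]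
  have hli := linearIndependent_of_mulVec_eq_smul_mulVec hA hinj hv0 hAv
  have hpairA : ∀ i j, v i ⬝ᵥ A *ᵥ v j = lam j * (v i ⬝ᵥ B *ᵥ v j) := fun i j => by
    rw [hAv j, dotProduct_smul, smul_eq_mul]
  have horth : ∀ i j, i ≠ j → v i ⬝ᵥ A *ᵥ v j = 0 ∧ v i ⬝ᵥ B *ᵥ v j = 0 := fun i j hij => by
    have hB := dotProduct_mulVec_eq_zero_of_ne hAs hBs (hAv i) (hAv j) (hinj.ne hij)
    exact ⟨by rw [hpairA, hB, mul_zero], hB⟩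
  have hself : ∀ i, v i ⬝ᵥ A *ᵥ v i ≠ 0 ∧ v i ⬝ᵥ B *ᵥ v i ≠ 0 := fun i => by
    have hB := dotProduct_mulVec_self_ne_zero hAs hBs hA hinj hv0 hAv i
    have hlam := ne_zero_of_mulVec_eq_smul_mulVec hA (hv0 i) (hAv i)
    exact ⟨by rw [hpairA]; exact mul_ne_zero hlam hB, hB⟩
  simp only [transpose_mul_mul_apply_of_cols, IsDiag]
  refine ⟨hli, hli.span_eq_top_of_card_eq_finrank (by simp), horth, hself, ?_,
    fun i j hij => (horth i j hij).1, fun i j hij => (horth i j hij).2,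
    fun i => (hself i).1, fun i => (hself i).2⟩
  rw [← isUnit_iff_isUnit_det]
  exact linearIndependent_cols_iff_isUnit.1 hli

/-- If the pencil of two invertible symmetric complex matrices `A`, `B` has
`n+1` distinct singular members (roots `λ₀, …, λₙ` of `det (A - t•B)`), with singular points
`v₀, …, vₙ`, then `(v₀, …, vₙ)` is a basis of `ℂ^{n+1}`, mutually orthogonal for both
quadratic forms, with nonzero self-pairings; consequently the matrix `P` with columns the
`vᵢ` is invertible and `PᵀAP`, `PᵀBP` are diagonal with nonzero diagonal entries:
the two quadrics are simultaneously diagonalized. -/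
theorem simultaneous_diagonalization
    (n : ℕ) (A B : Matrix (Fin (n+1)) (Fin (n+1)) ℂ)
    (hAs : A.IsSymm) (hBs : B.IsSymm) (hA : IsUnit A.det) (hB : IsUnit B.det)
    (lam : Fin (n+1) → ℂ) (hinj : Function.Injective lam)
    (hroots : ∀ t : ℂ, (A - t • B).det = 0 ↔ ∃ i, t = lam i)
    (v : Fin (n+1) → Fin (n+1) → ℂ) (hv0 : ∀ i, v i ≠ 0)
    (hv : ∀ i, (A - lam i • B) *ᵥ v i = 0) :
    LinearIndependent ℂ v ∧ Submodule.span ℂ (Set.range v) = ⊤ ∧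
    (∀ i j, i ≠ j → v i ⬝ᵥ (A *ᵥ v j) = 0 ∧ v i ⬝ᵥ (B *ᵥ v j) = 0) ∧
    (∀ i, v i ⬝ᵥ (A *ᵥ v i) ≠ 0 ∧ v i ⬝ᵥ (B *ᵥ v i) ≠ 0) ∧
    IsUnit (Matrix.of fun i j => v j i).det ∧
    ((Matrix.of fun i j => v j i)ᵀ * A * (Matrix.of fun i j => v j i)).IsDiag ∧
    ((Matrix.of fun i j => v j i)ᵀ * B * (Matrix.of fun i j => v j i)).IsDiag ∧
    (∀ i, ((Matrix.of fun i' j => v j i')ᵀ * A * (Matrix.of fun i' j => v j i')) i i ≠ 0) ∧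
    (∀ i, ((Matrix.of fun i' j => v j i')ᵀ * B * (Matrix.of fun i' j => v j i')) i i ≠ 0) :=
  simultaneous_diagonalization_general n A B hAs hBs hA lam hinj v hv0 hv
end

section
/- Let A be an invertible symmetric (n+1)×(n+1) complex matrix and let u ∈ ℂ^{n+1} be nonzero. Then the hyperplane {x : uᵀx = 0} is tangent to the smooth quadric Q_A — that is, there exist a nonzero p ∈ ℂ^{n+1} with pᵀAp = 0 and a scalar μ ∈ ℂ with u = μ·(Ap) — if and only if uᵀA⁻¹u = 0. Hence the dual quadric Q_A^∨ ⊂ (P^n)^∨, consisting of the tangent hyperplanes of Q_A, is the quadric associated to the inverse matrix A⁻¹. -/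
open Matrix

/-- A hyperplane `{x : uᵀx = 0}` (`u ≠ 0`) is tangent to the smooth quadric
`Q_A` (`A` invertible symmetric) — i.e. `u = μ·(Ap)` for some nonzero `p` with `pᵀAp = 0` —
iff `uᵀA⁻¹u = 0`. Hence the dual quadric `Q_A^∨` is the quadric of the inverse matrix. -/
theorem tangent_hyperplane_iff_on_dual_quadric
    (n : ℕ) (A : Matrix (Fin (n+1)) (Fin (n+1)) ℂ)
    (hAs : A.IsSymm) (hA : IsUnit A.det)
    (u : Fin (n+1) → ℂ) (hu : u ≠ 0) :
    (∃ p : Fin (n+1) → ℂ, p ≠ 0 ∧ p ⬝ᵥ (A *ᵥ p) = 0 ∧ ∃ μ : ℂ, u = μ • (A *ᵥ p)) ↔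
    u ⬝ᵥ (A⁻¹ *ᵥ u) = 0 := by
  have hinv : A⁻¹ * A = 1 := Matrix.nonsing_inv_mul A hA
  have hinv' : A * A⁻¹ = 1 := Matrix.mul_nonsing_inv A hA
  constructor
  · rintro ⟨p, hp, hpA, μ, rfl⟩
    have hμ : μ ≠ 0 := by
      rintro rfl
      simp at hu
    have hAinv : A⁻¹ *ᵥ (A *ᵥ p) = p := by
      rw [Matrix.mulVec_mulVec, hinv, Matrix.one_mulVec]
    have hsym : (A *ᵥ p) ⬝ᵥ p = p ⬝ᵥ (A *ᵥ p) := dotProduct_comm _ _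
    simp [Matrix.mulVec_smul, smul_dotProduct, dotProduct_smul, hAinv,
      hsym, hpA]
  · intro h
    refine ⟨A⁻¹ *ᵥ u, ?_, ?_, 1, ?_⟩
    · intro h0
      apply hu
      have : A *ᵥ (A⁻¹ *ᵥ u) = u := by
        rw [Matrix.mulVec_mulVec, hinv', Matrix.one_mulVec]
      rw [h0] at this
      simpa using this.symm
    · rw [Matrix.mulVec_mulVec, hinv', Matrix.one_mulVec, dotProduct_comm]
      exact h
    · rw [Matrix.mulVec_mulVec, hinv', Matrix.one_mulVec, one_smul]
end

section
/- Let n ≥ 2 and let A, B be invertible symmetric (n+1)×(n+1) complex matrices such that the pair {Q_A, Q_B} has normal crossings. If S is any symmetric (n+1)×(n+1) complex matrix such that xᵀSx = 0 for every x ∈ ℂ^{n+1} with xᵀAx = 0 and xᵀBx = 0, then S = αA + βB for some α, β ∈ ℂ; that is, every quadric containing the base locus Q_A ∩ Q_B lies in the pencil generated by Q_A and Q_B. -/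
/-!
Normal crossings forces `A⁻¹ B` to be diagonalizable with `n + 1` distinct eigenvalues: an
eigenvector `x` with `xᵀ A x = 0` would be a point of the base locus at which `A x` and `B x` are
proportional, and this excludes both Jordan blocks (`(A⁻¹ B - μ) y` would be such an `x`) and
repeated eigenvalues (a two-dimensional eigenspace contains an `A`-isotropic vector). So in
suitable coordinates `A = ∑ yᵢ²` and `B = ∑ λᵢ yᵢ²` with distinct `λᵢ`. For three coordinates
`i, j, k` the points with `yᵢ² = λⱼ - λₖ`, `yⱼ² = λₖ - λᵢ`, `yₖ² = λᵢ - λⱼ` (and all sign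
choices) lie on the base locus; evaluating `S` on them shows that `S` is diagonal in these
coordinates and that its diagonal entries `sᵢ` are collinear with the `λᵢ`, i.e.
`sᵢ = α + β λᵢ`.
-/

open Matrix Module Function

variable {K ι : Type*} [Field K] [Fintype ι]

def NormalCrossings (A B : Matrix ι ι K) : Prop :=
  ∀ x : ι → K, x ≠ 0 → x ⬝ᵥ (A *ᵥ x) = 0 → x ⬝ᵥ (B *ᵥ x) = 0 →
    LinearIndependent K ![A *ᵥ x, B *ᵥ x]

def VanishesOnBaseLocus (A B S : Matrix ι ι K) : Prop :=
  ∀ x : ι → K, x ⬝ᵥ (A *ᵥ x) = 0 → x ⬝ᵥ (B *ᵥ x) = 0 → x ⬝ᵥ (S *ᵥ x) = 0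

lemma Matrix.IsSymm.dotProduct_mulVec_comm_s5 {M : Matrix ι ι K} (hM : M.IsSymm) (u v : ι → K) :
    u ⬝ᵥ (M *ᵥ v) = v ⬝ᵥ (M *ᵥ u) := by
  rw [dotProduct_mulVec, ← mulVec_transpose, hM.eq, dotProduct_comm]

lemma exists_dotProduct_mulVec_add_smul_self_eq_zero [IsAlgClosed K] [NeZero (2 : K)]
    (M : Matrix ι ι K) (u : ι → K) {w : ι → K} (hw : w ⬝ᵥ (M *ᵥ w) ≠ 0) :
    ∃ c : K, (u + c • w) ⬝ᵥ (M *ᵥ (u + c • w)) = 0 := by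
  obtain ⟨s, hs⟩ := IsAlgClosed.exists_pow_nat_eq
    (discrim (w ⬝ᵥ (M *ᵥ w)) (u ⬝ᵥ (M *ᵥ w) + w ⬝ᵥ (M *ᵥ u)) (u ⬝ᵥ (M *ᵥ u))) two_pos
  obtain ⟨c, hc⟩ := exists_quadratic_eq_zero hw ⟨s, by rw [← hs, sq]⟩
  refine ⟨c, ?_⟩
  simp only [mulVec_add, dotProduct_add, add_dotProduct, mulVec_smul, smul_dotProduct,
    dotProduct_smul, smul_eq_mul]
  linear_combination hc

lemma Matrix.of_mul_mul_transpose_of_apply (v : ι → ι → K) (M : Matrix ι ι K) (i j : ι) :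
    (of v * M * (of v)ᵀ) i j = v i ⬝ᵥ (M *ᵥ v j) := by
  simp only [mul_apply, of_apply, transpose_apply, dotProduct, mulVec, Finset.sum_mul,
    Finset.mul_sum, mul_assoc]
  exact Finset.sum_comm

lemma dotProduct_transpose_mul_mul_mulVec (P M : Matrix ι ι K) (y : ι → K) :
    y ⬝ᵥ ((Pᵀ * M * P) *ᵥ y) = (P *ᵥ y) ⬝ᵥ (M *ᵥ (P *ᵥ y)) := by
  rw [← mulVec_mulVec, ← mulVec_mulVec, dotProduct_mulVec, vecMul_transpose]

lemma Matrix.IsSymm.transpose_mul_mul {M : Matrix ι ι K} (hM : M.IsSymm) (P : Matrix ι ι K) :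
    (Pᵀ * M * P).IsSymm := by
  rw [IsSymm, transpose_mul, transpose_mul, transpose_transpose, hM.eq, Matrix.mul_assoc]

lemma VanishesOnBaseLocus.transpose_mul_mul {A B S : Matrix ι ι K}
    (h : VanishesOnBaseLocus A B S) (P : Matrix ι ι K) :
    VanishesOnBaseLocus (Pᵀ * A * P) (Pᵀ * B * P) (Pᵀ * S * P) := by
  intro y hyA hyB
  rw [dotProduct_transpose_mul_mul_mulVec] at hyA hyB ⊢
  exact h _ hyA hyB

section DiagonalPencil

variable [DecidableEq ι]

lemma Fintype.exists_ne_ne_of_three_le_card (h : 3 ≤ Fintype.card ι) (i j : ι) :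
    ∃ k, k ≠ i ∧ k ≠ j := by
  obtain ⟨k, hk, hkj⟩ := Finset.exists_mem_ne (s := Finset.univ.erase i)
    (by rw [Finset.card_erase_of_mem (Finset.mem_univ i), Finset.card_univ]; omega) j
  exact ⟨k, Finset.ne_of_mem_erase hk, hkj⟩

variable {i j k : ι}

lemma dotProduct_mulVec_single_add_single_add_single (M : Matrix ι ι K) (a b c : K) :
    (Pi.single i a + Pi.single j b + Pi.single k c) ⬝ᵥ
        (M *ᵥ (Pi.single i a + Pi.single j b + Pi.single k c)) =
      M i i * a ^ 2 + M j j * b ^ 2 + M k k * c ^ 2 + (M i j + M j i) * (a * b) +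
        (M i k + M k i) * (a * c) + (M j k + M k j) * (b * c) := by
  simp only [mulVec_add, dotProduct_add, add_dotProduct, mulVec_single, single_dotProduct,
    Pi.smul_apply, op_smul_eq_mul, col_apply]
  ring

lemma dotProduct_diagonal_mulVec_single_add_single_add_single (d : ι → K)
    (hij : i ≠ j) (hik : i ≠ k) (hjk : j ≠ k) (a b c : K) :
    (Pi.single i a + Pi.single j b + Pi.single k c) ⬝ᵥ
        (diagonal d *ᵥ (Pi.single i a + Pi.single j b + Pi.single k c)) =
      d i * a ^ 2 + d j * b ^ 2 + d k * c ^ 2 := by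
  rw [dotProduct_mulVec_single_add_single_add_single]
  simp [hij, hik, hjk, hij.symm, hik.symm, hjk.symm]

variable [IsAlgClosed K] [NeZero (2 : K)] {L : ι → K} {T : Matrix ι ι K}

lemma VanishesOnBaseLocus.three_point_relations (hL : Injective L) (hT : T.IsSymm)
    (hq : VanishesOnBaseLocus 1 (diagonal L) T) (hij : i ≠ j) (hik : i ≠ k) (hjk : j ≠ k) :
    T i j = 0 ∧ T i i * (L j - L k) + T j j * (L k - L i) + T k k * (L i - L j) = 0 := by
  obtain ⟨a, ha⟩ := IsAlgClosed.exists_pow_nat_eq (L j - L k) two_pos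
  obtain ⟨b, hb⟩ := IsAlgClosed.exists_pow_nat_eq (L k - L i) two_pos
  obtain ⟨c, hc⟩ := IsAlgClosed.exists_pow_nat_eq (L i - L j) two_pos
  -- The cone equations only see squares, so every sign change of `(a, b, c)` stays on the cone.
  have hval : ∀ a' b' c' : K, a' ^ 2 = a ^ 2 → b' ^ 2 = b ^ 2 → c' ^ 2 = c ^ 2 →
      T i i * a ^ 2 + T j j * b ^ 2 + T k k * c ^ 2 +
        2 * (T i j * (a' * b') + T i k * (a' * c') + T j k * (b' * c')) = 0 := by
    intro a' b' c' ha' hb' hc'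
    rw [← diagonal_one] at hq
    have h := hq (Pi.single i a' + Pi.single j b' + Pi.single k c')
      (by rw [dotProduct_diagonal_mulVec_single_add_single_add_single _ hij hik hjk]
          linear_combination ha' + hb' + hc' + ha + hb + hc)
      (by rw [dotProduct_diagonal_mulVec_single_add_single_add_single _ hij hik hjk]
          linear_combination L i * ha' + L j * hb' + L k * hc' + L i * ha + L j * hb + L k * hc)
    rw [dotProduct_mulVec_single_add_single_add_single] at h
    linear_combination h - T i i * ha' - T j j * hb' - T k k * hc' +
      -(a' * b') * hT.apply i j - (a' * c') * hT.apply i k - (b' * c') * hT.apply j k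
  have h1 := hval a b c rfl rfl rfl
  have h2 := hval (-a) b c (neg_sq a) rfl rfl
  have h3 := hval a (-b) c rfl (neg_sq b) rfl
  have h4 := hval a b (-c) rfl rfl (neg_sq c)
  have h2ne : (2 : K) ≠ 0 := two_ne_zero
  constructor
  · have hab : a * b ≠ 0 := by
      refine mul_ne_zero ?_ ?_ <;> rintro rfl
      · exact hjk (hL (sub_eq_zero.1 (by simpa using ha.symm)))
      · exact hik (hL (sub_eq_zero.1 (by simpa using hb.symm))).symm
    have hoff : (2 * 2 * 2) * (T i j * (a * b)) = 0 := by
      linear_combination h1 - h2 - h3 + h4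
    simpa [h2ne, hab] using hoff
  · have hdiag : (2 * 2) * (T i i * a ^ 2 + T j j * b ^ 2 + T k k * c ^ 2) = 0 := by
      linear_combination h1 + h2 + h3 + h4
    rw [← ha, ← hb, ← hc]
    simpa [h2ne] using hdiag

lemma VanishesOnBaseLocus.collinear (hL : Injective L) (hT : T.IsSymm)
    (hq : VanishesOnBaseLocus 1 (diagonal L) T) (hij : i ≠ j) (k : ι) :
    T i i * (L j - L k) + T j j * (L k - L i) + T k k * (L i - L j) = 0 := by
  by_cases hki : k = i
  · subst hki; ring
  by_cases hkj : k = j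
  · subst hkj; ring
  exact (hq.three_point_relations hL hT hij (Ne.symm hki) (Ne.symm hkj)).2

theorem VanishesOnBaseLocus.exists_eq_smul_one_add_smul_diagonal (h3 : 3 ≤ Fintype.card ι)
    (hL : Injective L) (hT : T.IsSymm) (hq : VanishesOnBaseLocus 1 (diagonal L) T) :
    ∃ α β : K, T = α • 1 + β • diagonal L := by
  obtain ⟨i, j, hij⟩ := Fintype.exists_pair_of_one_lt_card (by omega : 1 < Fintype.card ι)
  have hLij : L i - L j ≠ 0 := sub_ne_zero.2 (hL.ne hij)
  set β := (T i i - T j j) / (L i - L j)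
  refine ⟨T i i - β * L i, β, ?_⟩
  ext p q
  by_cases hpq : p = q
  · subst hpq
    have h := hq.collinear hL hT hij p
    simp only [Matrix.add_apply, Matrix.smul_apply, one_apply_eq, diagonal_apply_eq,
      smul_eq_mul, β]
    field_simp
    linear_combination h
  · obtain ⟨k, hkp, hkq⟩ := Fintype.exists_ne_ne_of_three_le_card h3 p q
    simp [(hq.three_point_relations hL hT hpq (Ne.symm hkp) (Ne.symm hkq)).1, hpq]

end DiagonalPencil

namespace NormalCrossings

variable {A B : Matrix ι ι K}

lemma eq_zero_of_mulVec_eq_smul (hnc : NormalCrossings A B) {μ : K} {x : ι → K}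
    (hBx : B *ᵥ x = μ • (A *ᵥ x)) (hxA : x ⬝ᵥ (A *ᵥ x) = 0) : x = 0 := by
  by_contra hx
  have hxB : x ⬝ᵥ (B *ᵥ x) = 0 := by rw [hBx, dotProduct_smul, hxA, smul_zero]
  have := LinearIndependent.pair_iff.1 (hnc x hx hxA hxB) μ (-1) (by simp [hBx])
  exact one_ne_zero (neg_eq_zero.1 this.2)

end NormalCrossings

section PencilEndomorphism

variable [DecidableEq ι] {A B : Matrix ι ι K}

noncomputable def pencilEnd (A B : Matrix ι ι K) : End K (ι → K) :=
  toLin' (A⁻¹ * B)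

lemma pencilEnd_apply (A B : Matrix ι ι K) (v : ι → K) : pencilEnd A B v = (A⁻¹ * B) *ᵥ v :=
  toLin'_apply _ _

lemma mulVec_inv_mul_mulVec (hA : IsUnit A.det) (v : ι → K) :
    A *ᵥ ((A⁻¹ * B) *ᵥ v) = B *ᵥ v := by
  rw [mulVec_mulVec, ← Matrix.mul_assoc, mul_nonsing_inv A hA, Matrix.one_mul]

lemma mem_eigenspace_pencilEnd_iff (hA : IsUnit A.det) {μ : K} {x : ι → K} :
    x ∈ (pencilEnd A B).eigenspace μ ↔ B *ᵥ x = μ • (A *ᵥ x) := by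
  rw [End.mem_eigenspace_iff, pencilEnd_apply,
    ← (mulVec_injective_iff_isUnit.2 ((isUnit_iff_isUnit_det A).2 hA)).eq_iff,
    mulVec_inv_mul_mulVec hA, mulVec_smul]

lemma pencilEnd_dotProduct_mulVec (hAs : A.IsSymm) (hBs : B.IsSymm) (hA : IsUnit A.det)
    (u v : ι → K) :
    pencilEnd A B u ⬝ᵥ (A *ᵥ v) = u ⬝ᵥ (A *ᵥ pencilEnd A B v) := by
  rw [pencilEnd_apply, pencilEnd_apply, hAs.dotProduct_mulVec_comm_s5, mulVec_inv_mul_mulVec hA,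
    mulVec_inv_mul_mulVec hA, hBs.dotProduct_mulVec_comm_s5]

lemma dotProduct_mulVec_eq_zero_of_mem_eigenspace (hAs : A.IsSymm) (hBs : B.IsSymm)
    (hA : IsUnit A.det) {μ ν : K} (hμν : μ ≠ ν) {u v : ι → K}
    (hu : u ∈ (pencilEnd A B).eigenspace μ) (hv : v ∈ (pencilEnd A B).eigenspace ν) :
    u ⬝ᵥ (A *ᵥ v) = 0 := by
  have h := pencilEnd_dotProduct_mulVec hAs hBs hA u v
  rw [End.mem_eigenspace_iff.1 hu, End.mem_eigenspace_iff.1 hv, smul_dotProduct, mulVec_smul,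
    dotProduct_smul, smul_eq_mul, smul_eq_mul] at h
  exact (mul_eq_mul_right_iff.1 h).resolve_left hμν

lemma maxGenEigenspace_pencilEnd_eq_eigenspace (hAs : A.IsSymm) (hBs : B.IsSymm)
    (hA : IsUnit A.det) (hnc : NormalCrossings A B) (μ : K) :
    (pencilEnd A B).maxGenEigenspace μ = (pencilEnd A B).eigenspace μ := by
  set f := pencilEnd A B
  have hsq : LinearMap.ker ((f - μ • 1) ^ 1) = LinearMap.ker ((f - μ • 1) ^ 2) := by
    refine le_antisymm (LinearMap.ker_le_ker_comp _ _) fun y hy => ?_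
    rw [LinearMap.mem_ker, sq, End.mul_apply] at hy
    set x := (f - μ • 1) y
    have hx : x ∈ f.eigenspace μ := by rwa [End.eigenspace_def]
    -- `x = (f - μ) y` is `A`-orthogonal to itself because `f - μ` is `A`-self-adjoint.
    have hxA : x ⬝ᵥ (A *ᵥ x) = 0 := calc
      x ⬝ᵥ (A *ᵥ x) = x ⬝ᵥ (A *ᵥ f y) - μ * x ⬝ᵥ (A *ᵥ y) := by
        rw [← smul_eq_mul, ← dotProduct_smul, ← dotProduct_sub, ← mulVec_smul, ← mulVec_sub]
        rfl
      _ = f x ⬝ᵥ (A *ᵥ y) - μ * x ⬝ᵥ (A *ᵥ y) := by rw [pencilEnd_dotProduct_mulVec hAs hBs hA]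
      _ = 0 := by rw [End.mem_eigenspace_iff.1 hx, smul_dotProduct, smul_eq_mul, sub_self]
    rw [pow_one, LinearMap.mem_ker]
    exact hnc.eq_zero_of_mulVec_eq_smul ((mem_eigenspace_pencilEnd_iff hA).1 hx) hxA
  refine le_antisymm (fun y hy => ?_) (End.genEigenspace_le_maximal _ _ 1)
  obtain ⟨k, hk⟩ := (End.mem_maxGenEigenspace _ _ _).1 hy
  rw [End.eigenspace_def, ← pow_one (f - μ • 1), End.ker_pow_constant hsq k, LinearMap.mem_ker,
    pow_add, End.mul_apply, hk, map_zero]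

variable [IsAlgClosed K]

lemma exists_mem_eigenspace_pencilEnd_dotProduct_mulVec_eq_one (hA : IsUnit A.det)
    (hnc : NormalCrossings A B) {μ : K} (hμ : (pencilEnd A B).HasEigenvalue μ) :
    ∃ w ∈ (pencilEnd A B).eigenspace μ, w ⬝ᵥ (A *ᵥ w) = 1 := by
  obtain ⟨z, hz, hz0⟩ := hμ.exists_hasEigenvector
  have hzA : z ⬝ᵥ (A *ᵥ z) ≠ 0 :=
    fun h => hz0 (hnc.eq_zero_of_mulVec_eq_smul ((mem_eigenspace_pencilEnd_iff hA).1 hz) h)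
  obtain ⟨c, hc⟩ := IsAlgClosed.exists_pow_nat_eq (z ⬝ᵥ (A *ᵥ z))⁻¹ two_pos
  refine ⟨c • z, Submodule.smul_mem _ c hz, ?_⟩
  rw [mulVec_smul, smul_dotProduct, dotProduct_smul, smul_eq_mul, smul_eq_mul, ← mul_assoc,
    ← sq, hc, inv_mul_cancel₀ hzA]

variable [NeZero (2 : K)]

lemma eigenspace_pencilEnd_le_span_singleton (hA : IsUnit A.det) (hnc : NormalCrossings A B)
    {μ : K} {w : ι → K} (hw : w ∈ (pencilEnd A B).eigenspace μ) (hwA : w ⬝ᵥ (A *ᵥ w) ≠ 0) :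
    (pencilEnd A B).eigenspace μ ≤ Submodule.span K {w} := by
  intro u hu
  obtain ⟨c, hc⟩ := exists_dotProduct_mulVec_add_smul_self_eq_zero A u hwA
  have hucw : u + c • w ∈ (pencilEnd A B).eigenspace μ :=
    Submodule.add_mem _ hu (Submodule.smul_mem _ c hw)
  have h0 := hnc.eq_zero_of_mulVec_eq_smul ((mem_eigenspace_pencilEnd_iff hA).1 hucw) hc
  rw [eq_neg_of_add_eq_zero_left h0]
  exact Submodule.neg_mem _ (Submodule.smul_mem _ c (Submodule.mem_span_singleton_self w))

lemma span_range_eq_top_of_forall_mem_eigenspace (hAs : A.IsSymm) (hBs : B.IsSymm)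
    (hA : IsUnit A.det) (hnc : NormalCrossings A B) (w : (pencilEnd A B).Eigenvalues → ι → K)
    (hw : ∀ μ : (pencilEnd A B).Eigenvalues, w μ ∈ (pencilEnd A B).eigenspace μ)
    (hwA : ∀ μ, w μ ⬝ᵥ (A *ᵥ w μ) = 1) :
    Submodule.span K (Set.range w) = ⊤ := by
  rw [eq_top_iff, ← End.iSup_maxGenEigenspace_eq_top, iSup_le_iff]
  intro μ
  rw [maxGenEigenspace_pencilEnd_eq_eigenspace hAs hBs hA hnc]
  by_cases hμ : (pencilEnd A B).HasEigenvalue μ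
  · have hwA' := hwA ⟨μ, hμ⟩
    refine (eigenspace_pencilEnd_le_span_singleton hA hnc (hw ⟨μ, hμ⟩) ?_).trans
      (Submodule.span_mono (Set.singleton_subset_iff.2 (Set.mem_range_self _)))
    exact hwA' ▸ one_ne_zero
  · rw [End.hasEigenvalue_iff, not_not] at hμ
    rw [hμ]
    exact bot_le

theorem exists_transpose_mul_mul_eq_one_and_eq_diagonal (hAs : A.IsSymm) (hBs : B.IsSymm)
    (hA : IsUnit A.det) (hnc : NormalCrossings A B) :
    ∃ (P : Matrix ι ι K) (L : ι → K),
      Injective L ∧ Pᵀ * A * P = 1 ∧ Pᵀ * B * P = diagonal L := by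
  choose w hw hwA using fun μ : (pencilEnd A B).Eigenvalues =>
    exists_mem_eigenspace_pencilEnd_dotProduct_mulVec_eq_one hA hnc μ.2
  have hcard : Fintype.card ι ≤ Fintype.card (pencilEnd A B).Eigenvalues := by
    have h := finrank_range_le_card (R := K) w
    rwa [Set.finrank, span_range_eq_top_of_forall_mem_eigenspace hAs hBs hA hnc w hw hwA,
      finrank_top, finrank_fintype_fun_eq_card] at h
  obtain ⟨e⟩ := Function.Embedding.nonempty_of_card_le hcard
  have hortho : ∀ i j, w (e i) ⬝ᵥ (A *ᵥ w (e j)) = if i = j then 1 else 0 := by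
    intro i j
    split_ifs with hij
    · rw [hij, hwA]
    · exact dotProduct_mulVec_eq_zero_of_mem_eigenspace hAs hBs hA
        (fun h => hij (e.injective (Subtype.val_injective h))) (hw _) (hw _)
  refine ⟨(of fun i => w (e i))ᵀ, fun i => e i, Subtype.val_injective.comp e.injective, ?_, ?_⟩
  · ext i j
    rw [transpose_transpose, of_mul_mul_transpose_of_apply, hortho, one_apply]
  · ext i j
    rw [transpose_transpose, of_mul_mul_transpose_of_apply,
      (mem_eigenspace_pencilEnd_iff hA).1 (hw _), dotProduct_smul, hortho, diagonal_apply]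
    split_ifs with hij
    · subst hij
      exact mul_one _
    · exact mul_zero _

end PencilEndomorphism

theorem quadric_through_base_locus_lies_in_pencil_general
    (n : ℕ) (hn : 2 ≤ n) (A B : Matrix (Fin (n+1)) (Fin (n+1)) ℂ)
    (hAs : A.IsSymm) (hBs : B.IsSymm) (hA : IsUnit A.det)
    (hnc : ∀ x : Fin (n+1) → ℂ, x ≠ 0 → x ⬝ᵥ (A *ᵥ x) = 0 → x ⬝ᵥ (B *ᵥ x) = 0 →
      LinearIndependent ℂ ![A *ᵥ x, B *ᵥ x])
    (S : Matrix (Fin (n+1)) (Fin (n+1)) ℂ) (hSs : S.IsSymm)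
    (hS : ∀ x : Fin (n+1) → ℂ, x ⬝ᵥ (A *ᵥ x) = 0 → x ⬝ᵥ (B *ᵥ x) = 0 →
      x ⬝ᵥ (S *ᵥ x) = 0) :
    ∃ α β : ℂ, S = α • A + β • B := by
  obtain ⟨P, L, hL, hPA, hPB⟩ := exists_transpose_mul_mul_eq_one_and_eq_diagonal hAs hBs hA hnc
  have hP : IsUnit P := by
    have h := congrArg det hPA
    rw [det_mul, det_mul, det_transpose, det_one] at h
    exact (isUnit_iff_isUnit_det P).2 (IsUnit.of_mul_eq_one_right _ h)
  have hT : VanishesOnBaseLocus 1 (diagonal L) (Pᵀ * S * P) := by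
    simpa only [hPA, hPB] using VanishesOnBaseLocus.transpose_mul_mul hS P
  obtain ⟨α, β, hαβ⟩ := hT.exists_eq_smul_one_add_smul_diagonal
    (by simpa using hn) hL (hSs.transpose_mul_mul P)
  refine ⟨α, β, ((isUnit_transpose P).2 hP).mul_left_cancel (hP.mul_right_cancel ?_)⟩
  rw [hαβ, Matrix.mul_add, Matrix.add_mul, Matrix.mul_smul, Matrix.smul_mul,
    Matrix.mul_smul, Matrix.smul_mul, hPA, hPB]

/-- For `n ≥ 2`, if the pair of smooth quadrics `{Q_A, Q_B}` has normal
crossings, then every quadric containing the base locus `Q_A ∩ Q_B` lies in the pencil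
generated by `Q_A` and `Q_B`: any symmetric `S` with `xᵀSx = 0` whenever `xᵀAx = 0` and
`xᵀBx = 0` satisfies `S = αA + βB` for some scalars `α`, `β`. -/
theorem quadric_through_base_locus_lies_in_pencil
    (n : ℕ) (hn : 2 ≤ n) (A B : Matrix (Fin (n+1)) (Fin (n+1)) ℂ)
    (hAs : A.IsSymm) (hBs : B.IsSymm) (hA : IsUnit A.det) (hB : IsUnit B.det)
    (hnc : ∀ x : Fin (n+1) → ℂ, x ≠ 0 → x ⬝ᵥ (A *ᵥ x) = 0 → x ⬝ᵥ (B *ᵥ x) = 0 →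
      LinearIndependent ℂ ![A *ᵥ x, B *ᵥ x])
    (S : Matrix (Fin (n+1)) (Fin (n+1)) ℂ) (hSs : S.IsSymm)
    (hS : ∀ x : Fin (n+1) → ℂ, x ⬝ᵥ (A *ᵥ x) = 0 → x ⬝ᵥ (B *ᵥ x) = 0 →
      x ⬝ᵥ (S *ᵥ x) = 0) :
    ∃ α β : ℂ, S = α • A + β • B :=
  quadric_through_base_locus_lies_in_pencil_general n hn A B hAs hBs hA hnc S hSs hS
end

section
/- Let n ≥ 2 and let (A, B) and (C, D) be two pairs of invertible symmetric (n+1)×(n+1) complex matrices such that both pairs of quadrics {Q_A, Q_B} and {Q_C, Q_D} have normal crossings. Then the two pairs have the same set of tangent hyperplanes, i.e. {u ∈ ℂ^{n+1} \ {0} : uᵀA⁻¹u = 0 and uᵀB⁻¹u = 0} = {u ∈ ℂ^{n+1} \ {0} : uᵀC⁻¹u = 0 and uᵀD⁻¹u = 0}, if and only if the pencils of dual quadrics coincide, i.e. the ℂ-linear span of {A⁻¹, B⁻¹} equals the ℂ-linear span of {C⁻¹, D⁻¹} inside the space of symmetric matrices. -/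
/-!
A normal-crossing pair `(A, B)` is brought by one congruence to `(1, diagonal μ)` with pairwise
distinct `μ i`. Relative to `A`, normal crossing says that every eigenvector of `B` is
anisotropic; this makes the `A`-symmetric operator `B` diagonalizable with one-dimensional
eigenspaces that are pairwise orthogonal, so an `A`-orthonormal eigenbasis exists. Dually,
`A⁻¹` and `B⁻¹` become `1` and `diagonal μ⁻¹`.

For such a diagonal pencil in at least three variables, a quadric vanishing on the base locus
`{∑ uᵢ² = ∑ uᵢ² / μᵢ = 0}` lies in the pencil: evaluating it at the points of the base locus
with exactly three nonzero coordinates shows that it is diagonal, with entries an affine function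
of `1 / μᵢ`. So each dual pencil is recovered from its base locus, which is the set of common
tangent hyperplanes; conversely the pencil determines its base locus.
-/

open Matrix Module

namespace QuadricPencil

variable {ι : Type*}

theorem exists_eq_add_mul_of_collinear [Nontrivial ι] {d m : ι → ℂ} (hd : Function.Injective d)
    (h : ∀ i j k, i ≠ j → i ≠ k → j ≠ k →
      m i * (d j - d k) + m j * (d k - d i) + m k * (d i - d j) = 0) :
    ∃ α β : ℂ, ∀ k, m k = α + β * d k := by
  obtain ⟨i, j, hij⟩ := exists_pair_ne ι
  have hd' : d i - d j ≠ 0 := sub_ne_zero.mpr (hd.ne hij)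
  refine ⟨(m j * d i - m i * d j) / (d i - d j), (m i - m j) / (d i - d j), fun k => ?_⟩
  field_simp
  rcases eq_or_ne k i with rfl | hki
  · ring
  rcases eq_or_ne k j with rfl | hkj
  · ring
  linear_combination h i j k hij hki.symm hkj.symm

variable [Fintype ι]

def NormalCrossing (A B : Matrix ι ι ℂ) : Prop :=
  ∀ x : ι → ℂ, x ≠ 0 → x ⬝ᵥ (A *ᵥ x) = 0 → x ⬝ᵥ (B *ᵥ x) = 0 →
    LinearIndependent ℂ ![A *ᵥ x, B *ᵥ x]

def baseLocus (X Y : Matrix ι ι ℂ) : Set (ι → ℂ) :=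
  {u | u ⬝ᵥ (X *ᵥ u) = 0 ∧ u ⬝ᵥ (Y *ᵥ u) = 0}

def BaseLocusDeterminesPencil (X Y : Matrix ι ι ℂ) : Prop :=
  ∀ M : Matrix ι ι ℂ, M.IsSymm → (∀ u ∈ baseLocus X Y, u ⬝ᵥ (M *ᵥ u) = 0) →
    M ∈ Submodule.span ℂ {X, Y}

theorem dotProduct_mulVec_comm_of_isSymm {M : Matrix ι ι ℂ} (hM : M.IsSymm) (x y : ι → ℂ) :
    x ⬝ᵥ (M *ᵥ y) = y ⬝ᵥ (M *ᵥ x) := by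
  rw [dotProduct_mulVec, ← mulVec_transpose, hM.eq, dotProduct_comm]

theorem dotProduct_transpose_mul_mul_mulVec (P X : Matrix ι ι ℂ) (u : ι → ℂ) :
    u ⬝ᵥ ((Pᵀ * X * P) *ᵥ u) = (P *ᵥ u) ⬝ᵥ (X *ᵥ (P *ᵥ u)) := by
  rw [← mulVec_mulVec, ← mulVec_mulVec, dotProduct_mulVec, vecMul_transpose]

theorem dotProduct_mul_mul_transpose_mulVec (Q X : Matrix ι ι ℂ) (u : ι → ℂ) :
    u ⬝ᵥ ((Q * X * Qᵀ) *ᵥ u) = (Qᵀ *ᵥ u) ⬝ᵥ (X *ᵥ (Qᵀ *ᵥ u)) := by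
  simpa only [transpose_transpose] using dotProduct_transpose_mul_mul_mulVec Qᵀ X u

theorem _root_.Matrix.IsSymm.transpose_mul_mul_s7 {X : Matrix ι ι ℂ} (hX : X.IsSymm)
    (P : Matrix ι ι ℂ) :
    (Pᵀ * X * P).IsSymm := by
  simp [IsSymm, transpose_mul, hX.eq, Matrix.mul_assoc]

theorem mem_baseLocus_mul_mul_transpose {X Y Q : Matrix ι ι ℂ} {u : ι → ℂ} :
    u ∈ baseLocus (Q * X * Qᵀ) (Q * Y * Qᵀ) ↔ Qᵀ *ᵥ u ∈ baseLocus X Y := by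
  simp only [baseLocus, Set.mem_ofPred_eq, dotProduct_mul_mul_transpose_mulVec]

theorem dotProduct_mulVec_eq_zero_of_mem_span_pair {X Y M : Matrix ι ι ℂ}
    (hM : M ∈ Submodule.span ℂ {X, Y}) {u : ι → ℂ} (hu : u ∈ baseLocus X Y) :
    u ⬝ᵥ (M *ᵥ u) = 0 := by
  obtain ⟨a, b, rfl⟩ := Submodule.mem_span_pair.mp hM
  simp [add_mulVec, smul_mulVec, hu.1, hu.2]

theorem BaseLocusDeterminesPencil.span_le_iff {X Y Z W : Matrix ι ι ℂ}
    (h : BaseLocusDeterminesPencil X Y) (hZ : Z.IsSymm) (hW : W.IsSymm) :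
    Submodule.span ℂ {Z, W} ≤ Submodule.span ℂ {X, Y} ↔ baseLocus X Y ⊆ baseLocus Z W := by
  refine ⟨fun hle u hu => ?_, fun hsub => ?_⟩
  · exact ⟨dotProduct_mulVec_eq_zero_of_mem_span_pair (hle (Submodule.subset_span (by simp))) hu,
      dotProduct_mulVec_eq_zero_of_mem_span_pair (hle (Submodule.subset_span (by simp))) hu⟩
  · rw [Submodule.span_le, Set.insert_subset_iff, Set.singleton_subset_iff]
    exact ⟨h Z hZ fun u hu => (hsub hu).1, h W hW fun u hu => (hsub hu).2⟩

theorem setOf_ne_zero_eq_iff_baseLocus_eq {X Y Z W : Matrix ι ι ℂ} :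
    {u : ι → ℂ | u ≠ 0 ∧ u ⬝ᵥ (X *ᵥ u) = 0 ∧ u ⬝ᵥ (Y *ᵥ u) = 0} =
        {u : ι → ℂ | u ≠ 0 ∧ u ⬝ᵥ (Z *ᵥ u) = 0 ∧ u ⬝ᵥ (W *ᵥ u) = 0} ↔
      baseLocus X Y = baseLocus Z W := by
  simp only [Set.ext_iff, baseLocus, Set.mem_ofPred_eq]
  refine forall_congr' fun u => ?_
  rcases eq_or_ne u 0 with rfl | hu
  · simp
  · simp [hu]

theorem dotProduct_eq_zero_of_eigenvalue_ne {B : Matrix ι ι ℂ} (hBs : B.IsSymm)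
    {v w : ι → ℂ} {μ ν : ℂ} (hv : B *ᵥ v = μ • v) (hw : B *ᵥ w = ν • w) (hμν : μ ≠ ν) :
    v ⬝ᵥ w = 0 := by
  have h : μ * (v ⬝ᵥ w) = ν * (v ⬝ᵥ w) :=
    calc μ * (v ⬝ᵥ w) = w ⬝ᵥ (B *ᵥ v) := by rw [hv, dotProduct_smul, smul_eq_mul, dotProduct_comm]
      _ = v ⬝ᵥ (B *ᵥ w) := dotProduct_mulVec_comm_of_isSymm hBs w v
      _ = ν * (v ⬝ᵥ w) := by rw [hw, dotProduct_smul, smul_eq_mul]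
  by_contra hvw
  exact hμν (mul_right_cancel₀ hvw h)

variable [DecidableEq ι]

theorem exists_transpose_mul_mul_eq_one_of_pairwise (X : Matrix ι ι ℂ) (v : ι → ι → ℂ)
    (horth : Pairwise fun i j => v i ⬝ᵥ (X *ᵥ v j) = 0)
    (hv : ∀ i, v i ⬝ᵥ (X *ᵥ v i) ≠ 0) :
    ∃ P : Matrix ι ι ℂ, Pᵀ * X * P = 1 ∧ ∀ i, ∃ c : ℂ, Pᵀ i = c • v i := by
  choose c hc using fun i => IsAlgClosed.exists_pow_nat_eq (v i ⬝ᵥ (X *ᵥ v i))⁻¹ two_pos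
  refine ⟨(of fun i => c i • v i)ᵀ, ?_, fun i => ⟨c i, rfl⟩⟩
  ext i j
  rw [mul_mul_apply, transpose_transpose]
  change (c i • v i) ⬝ᵥ (X *ᵥ (c j • v j)) = _
  simp only [mulVec_smul, dotProduct_smul, smul_dotProduct, smul_eq_mul]
  rcases eq_or_ne i j with rfl | hij
  · rw [one_apply_eq, ← mul_assoc, ← sq, hc, inv_mul_cancel₀ (hv i)]
  · rw [one_apply_ne hij, horth hij, mul_zero, mul_zero]

theorem exists_transpose_mul_mul_eq_one {A : Matrix ι ι ℂ} (hA : A.IsSymm) (hdet : IsUnit A.det) :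
    ∃ P : Matrix ι ι ℂ, Pᵀ * A * P = 1 := by
  let F := toBilin' A
  have hF : ∀ x y, F x y = x ⬝ᵥ (A *ᵥ y) := toBilin'_apply' A
  obtain ⟨v, hv⟩ := LinearMap.BilinForm.exists_orthogonal_basis (B := F)
    ⟨fun x y => by simp only [hF, RingHom.id_apply]; exact dotProduct_mulVec_comm_of_isSymm hA x y⟩
  let e := v.indexEquiv (Pi.basisFun ℂ ι)
  let b := v.reindex e
  have hb : F.iIsOrtho b := fun i j hij => by
    simpa [b, Function.onFun] using hv (e.symm.injective.ne hij)
  obtain ⟨P, hP, -⟩ := exists_transpose_mul_mul_eq_one_of_pairwise A b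
    (fun i j hij => by simpa only [hF] using hb hij) fun i => by
      simpa only [hF] using hb.not_isOrtho_basis_self_of_nondegenerate
        (nondegenerate_of_det_ne_zero hdet.ne_zero).toBilin' i
  exact ⟨P, hP⟩

theorem NormalCrossing.transpose_mul_mul_s7 {A B P : Matrix ι ι ℂ} (h : NormalCrossing A B)
    (hP : IsUnit P.det) : NormalCrossing (Pᵀ * A * P) (Pᵀ * B * P) := by
  intro x hx hAx hBx
  rw [dotProduct_transpose_mul_mul_mulVec] at hAx hBx
  have hPx : P *ᵥ x ≠ 0 := fun h0 => hx (eq_zero_of_mulVec_eq_zero hP.ne_zero h0)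
  have hker : LinearMap.ker (mulVecLin Pᵀ) = ⊥ :=
    LinearMap.ker_eq_bot.mpr <| mulVec_injective_iff_isUnit.mpr <|
      (isUnit_iff_isUnit_det _).mpr (by rwa [det_transpose])
  have hcomp : ![(Pᵀ * A * P) *ᵥ x, (Pᵀ * B * P) *ᵥ x] =
      mulVecLin Pᵀ ∘ ![A *ᵥ (P *ᵥ x), B *ᵥ (P *ᵥ x)] := by
    ext i : 1
    fin_cases i <;> simp only [Fin.zero_eta, Fin.mk_one, cons_val_zero, cons_val_one,
      Function.comp_apply, mulVecLin_apply, mulVec_mulVec, Matrix.mul_assoc]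
  rw [hcomp]
  exact (h _ hPx hAx hBx).map' _ hker

section Eigenvectors

variable {B : Matrix ι ι ℂ}

theorem NormalCrossing.dotProduct_self_ne_zero (hB : NormalCrossing 1 B) {v : ι → ℂ} {μ : ℂ}
    (hv : v ≠ 0) (hμ : B *ᵥ v = μ • v) : v ⬝ᵥ v ≠ 0 := by
  intro hvv
  have hli := hB v hv (by rwa [one_mulVec]) (by rw [hμ, dotProduct_smul, hvv, smul_zero])
  rw [one_mulVec, hμ, LinearIndependent.pair_iff] at hli
  exact one_ne_zero (neg_eq_zero.mp (hli μ (-1) (by simp)).2)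

theorem NormalCrossing.exists_smul_eq_of_eigenvector (hB : NormalCrossing 1 B)
    {v w : ι → ℂ} {μ : ℂ} (hv0 : v ≠ 0) (hv : B *ᵥ v = μ • v) (hw : B *ᵥ w = μ • w) :
    ∃ a : ℂ, a • v = w := by
  by_contra! hli
  rw [← LinearIndependent.pair_iff' hv0] at hli
  have ha := hB.dotProduct_self_ne_zero hv0 hv
  -- a nonzero isotropic vector in the plane spanned by `v` and `w`
  obtain ⟨r, hr⟩ := IsAlgClosed.exists_pow_nat_eq ((v ⬝ᵥ w) ^ 2 - (v ⬝ᵥ v) * (w ⬝ᵥ w)) two_pos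
  set u := (r - v ⬝ᵥ w) • v + (v ⬝ᵥ v) • w
  have hu0 : u ≠ 0 := fun h0 => ha (LinearIndependent.pair_iff.mp hli _ _ h0).2
  refine hB.dotProduct_self_ne_zero hu0 (μ := μ) ?_ ?_
  · simp only [u, mulVec_add, mulVec_smul, hv, hw, smul_add, smul_comm μ]
  · simp only [u, dotProduct_add, add_dotProduct, dotProduct_smul, smul_dotProduct, smul_eq_mul,
      dotProduct_comm w v]
    linear_combination (v ⬝ᵥ v) * hr

theorem NormalCrossing.injective_of_basis_eigenvalues (hB : NormalCrossing 1 B)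
    (b : Basis ι ℂ (ι → ℂ)) {μ : ι → ℂ} (hμ : ∀ i, B *ᵥ b i = μ i • b i) :
    Function.Injective μ := by
  intro i j hij
  by_contra hne
  obtain ⟨a, ha⟩ := hB.exists_smul_eq_of_eigenvector (b.ne_zero i) (hμ i) (hij ▸ hμ j)
  have hli : LinearIndependent ℂ ![b i, b j] := by
    rw [show ![b i, b j] = b ∘ ![i, j] by ext k : 1; fin_cases k <;> rfl]
    exact b.linearIndependent.comp _ (injective_pair_iff_ne.mpr hne)
  exact (LinearIndependent.pair_iff' (b.ne_zero i)).mp hli a ha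

theorem NormalCrossing.span_eigenvectors_eq_top (hB : NormalCrossing 1 B) (hBs : B.IsSymm) :
    Submodule.span ℂ {v : ι → ℂ | ∃ μ : ℂ, B *ᵥ v = μ • v} = ⊤ := by
  set W := Submodule.span ℂ {v : ι → ℂ | ∃ μ : ℂ, B *ᵥ v = μ • v}
  by_contra hW
  have hWB : W ≤ W.comap (mulVecLin B) := by
    refine Submodule.span_le.mpr ?_
    rintro v ⟨μ, hv⟩
    simpa [hv] using W.smul_mem μ (Submodule.subset_span ⟨μ, hv⟩)
  let F : LinearMap.BilinForm ℂ (ι → ℂ) := toBilin' 1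
  have hF : ∀ x y, F x y = x ⬝ᵥ y := fun x y => by simp [F, toBilin'_apply']
  -- the orthogonal complement of `W` is a nonzero `B`-invariant subspace ...
  have hWperp : ∀ u ∈ F.orthogonal W, B *ᵥ u ∈ F.orthogonal W := fun u hu w hw => by
    have := hu _ (hWB hw)
    simp only [hF] at this ⊢
    rw [dotProduct_mulVec_comm_of_isSymm hBs, dotProduct_comm]
    exact this
  have : 0 < finrank ℂ (F.orthogonal W) := by
    rw [LinearMap.BilinForm.finrank_orthogonal (nondegenerate_of_det_ne_zero (by simp)).toBilin']
    have := Submodule.finrank_lt hW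
    omega
  have : Nontrivial (F.orthogonal W) := Module.nontrivial_of_finrank_pos this
  obtain ⟨μ, hμ⟩ := Module.End.exists_eigenvalue ((mulVecLin B).restrict hWperp)
  obtain ⟨x, hx⟩ := hμ.exists_hasEigenvector
  have hBx : B *ᵥ x = μ • x := congrArg Subtype.val hx.apply_eq_smul
  refine hB.dotProduct_self_ne_zero (fun h => hx.2 (Subtype.ext h)) hBx ?_
  rw [← hF]
  exact x.2 _ (Submodule.subset_span ⟨μ, hBx⟩)

theorem NormalCrossing.exists_orthogonal_diagonalization (hB : NormalCrossing 1 B)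
    (hBs : B.IsSymm) : ∃ (O : Matrix ι ι ℂ) (μ : ι → ℂ),
      Function.Injective μ ∧ Oᵀ * O = 1 ∧ Oᵀ * B * O = diagonal μ := by
  have hspan := (hB.span_eigenvectors_eq_top hBs).ge
  let b₀ := Basis.ofSpan hspan
  let b := b₀.reindex (b₀.indexEquiv (Pi.basisFun ℂ ι))
  have hb : ∀ i, ∃ μ : ℂ, B *ᵥ b i = μ • b i := fun i =>
    Basis.ofSpan_subset hspan ⟨_, (b₀.reindex_apply _ i).symm⟩
  choose μ hμ using hb
  have hμinj := hB.injective_of_basis_eigenvalues b hμ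
  obtain ⟨O, hO, hOb⟩ := exists_transpose_mul_mul_eq_one_of_pairwise 1 b
    (fun i j hij => by simpa only [one_mulVec] using
      dotProduct_eq_zero_of_eigenvalue_ne hBs (hμ i) (hμ j) (hμinj.ne hij))
    fun i => by simpa only [one_mulVec] using hB.dotProduct_self_ne_zero (b.ne_zero i) (hμ i)
  have hOμ : ∀ j, B *ᵥ Oᵀ j = μ j • Oᵀ j := fun j => by
    obtain ⟨c, hc⟩ := hOb j
    rw [hc, mulVec_smul, hμ j, smul_comm]
  refine ⟨O, μ, hμinj, by rwa [Matrix.mul_one] at hO, ?_⟩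
  ext i j
  have hij := congrFun (congrFun hO i) j
  rw [mul_mul_apply, one_mulVec] at hij
  rw [mul_mul_apply, hOμ, dotProduct_smul, hij, smul_eq_mul, diagonal_apply, one_apply]
  split_ifs with h <;> simp [h]

end Eigenvectors

theorem NormalCrossing.exists_simultaneous_diagonalization {A B : Matrix ι ι ℂ}
    (hAB : NormalCrossing A B) (hAs : A.IsSymm) (hBs : B.IsSymm) (hA : IsUnit A.det) :
    ∃ (P : Matrix ι ι ℂ) (μ : ι → ℂ),
      Function.Injective μ ∧ Pᵀ * A * P = 1 ∧ Pᵀ * B * P = diagonal μ := by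
  obtain ⟨P₀, hP₀⟩ := exists_transpose_mul_mul_eq_one hAs hA
  have hB₀ := hAB.transpose_mul_mul_s7 (isUnit_det_of_left_inverse hP₀)
  rw [hP₀] at hB₀
  obtain ⟨O, μ, hμ, hO, hOB⟩ := hB₀.exists_orthogonal_diagonalization (hBs.transpose_mul_mul_s7 P₀)
  refine ⟨P₀ * O, μ, hμ, ?_, ?_⟩
  · calc (P₀ * O)ᵀ * A * (P₀ * O) = Oᵀ * (P₀ᵀ * A * P₀) * O := by
          simp only [transpose_mul, Matrix.mul_assoc]
      _ = 1 := by rw [hP₀, Matrix.mul_one, hO]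
  · rw [← hOB]
    simp only [transpose_mul, Matrix.mul_assoc]

theorem inv_eq_mul_mul_transpose {X P D E : Matrix ι ι ℂ} (h : Pᵀ * X * P = D) (hDE : D * E = 1) :
    X⁻¹ = P * E * Pᵀ := by
  refine inv_eq_right_inv ?_
  have : Pᵀ * (X * P * E) = 1 := by rw [← hDE, ← h]; simp only [Matrix.mul_assoc]
  rw [mul_eq_one_comm] at this
  simpa only [Matrix.mul_assoc] using this

theorem dotProduct_mulVec_single_add_single_add_single (M : Matrix ι ι ℂ) (i j k : ι)
    (a b c : ℂ) :
    (Pi.single i a + Pi.single j b + Pi.single k c) ⬝ᵥ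
        (M *ᵥ (Pi.single i a + Pi.single j b + Pi.single k c)) =
      a * a * M i i + b * b * M j j + c * c * M k k + a * b * (M i j + M j i) +
        a * c * (M i k + M k i) + b * c * (M j k + M k j) := by
  simp only [mulVec_add, dotProduct_add, add_dotProduct, mulVec_single, single_dotProduct,
    Pi.smul_apply, col_apply, op_smul_eq_mul]
  ring

theorem apply_eq_zero_and_collinear_of_vanishes_on_baseLocus {d : ι → ℂ}
    (hd : Function.Injective d) {M : Matrix ι ι ℂ} (hM : M.IsSymm)
    (hvan : ∀ u ∈ baseLocus 1 (diagonal d), u ⬝ᵥ (M *ᵥ u) = 0) {i j k : ι}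
    (hij : i ≠ j) (hik : i ≠ k) (hjk : j ≠ k) :
    M i j = 0 ∧ M i i * (d j - d k) + M j j * (d k - d i) + M k k * (d i - d j) = 0 := by
  -- the four points `a • eᵢ ± b • eⱼ ± c • eₖ` lie on the base locus
  obtain ⟨a, ha⟩ := IsAlgClosed.exists_pow_nat_eq (d j - d k) two_pos
  obtain ⟨b, hb⟩ := IsAlgClosed.exists_pow_nat_eq (d k - d i) two_pos
  obtain ⟨c, hc⟩ := IsAlgClosed.exists_pow_nat_eq (d i - d j) two_pos
  have hq : ∀ s t : ℂ, s ^ 2 = 1 → t ^ 2 = 1 →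
      a * a * M i i + (s * b) * (s * b) * M j j + (t * c) * (t * c) * M k k +
        a * (s * b) * (M i j + M j i) + a * (t * c) * (M i k + M k i) +
        (s * b) * (t * c) * (M j k + M k j) = 0 := by
    intro s t hs ht
    rw [← dotProduct_mulVec_single_add_single_add_single]
    refine hvan _ ⟨?_, ?_⟩ <;>
      rw [dotProduct_mulVec_single_add_single_add_single] <;>
      simp only [one_apply_eq, one_apply_ne, diagonal_apply_eq, diagonal_apply_ne, hij, hik, hjk,
        hij.symm, hik.symm, hjk.symm, Ne, not_false_eq_true]
    · linear_combination ha + hb + hc + b * b * hs + c * c * ht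
    · linear_combination d i * ha + d j * hb + d k * hc + d j * (b * b) * hs + d k * (c * c) * ht
  have e1 := hq 1 1 (by norm_num) (by norm_num)
  have e2 := hq 1 (-1) (by norm_num) (by norm_num)
  have e3 := hq (-1) 1 (by norm_num) (by norm_num)
  have e4 := hq (-1) (-1) (by norm_num) (by norm_num)
  have hab : a * b ≠ 0 := mul_ne_zero
    (by rintro rfl; exact sub_ne_zero.mpr (hd.ne hjk) (by simpa using ha.symm))
    (by rintro rfl; exact sub_ne_zero.mpr (hd.ne hik.symm) (by simpa using hb.symm))
  constructor
  · have h : a * b * (2 * M i j) = 0 := by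
      linear_combination (e1 + e2 - e3 - e4) / 4 - a * b * hM.apply i j
    simpa [hab] using h
  · linear_combination (e1 + e2 + e3 + e4) / 4 - M i i * ha - M j j * hb - M k k * hc

theorem exists_ne_and_ne_of_three_le_card (hι : 3 ≤ Fintype.card ι) (i j : ι) :
    ∃ k, k ≠ i ∧ k ≠ j := by
  obtain ⟨k, -, hk⟩ := Finset.exists_mem_notMem_of_card_lt_card (s := {i, j}) (t := Finset.univ)
    (by rw [Finset.card_univ]; have := Finset.card_le_two (a := i) (b := j); omega)
  simp only [Finset.mem_insert, Finset.mem_singleton, not_or] at hk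
  exact ⟨k, hk⟩

theorem baseLocusDeterminesPencil_one_diagonal (hι : 3 ≤ Fintype.card ι) {d : ι → ℂ}
    (hd : Function.Injective d) : BaseLocusDeterminesPencil 1 (diagonal d) := by
  intro M hM hvan
  have hM' := fun i j k (hij : i ≠ j) (hik : i ≠ k) (hjk : j ≠ k) =>
    apply_eq_zero_and_collinear_of_vanishes_on_baseLocus hd hM hvan hij hik hjk
  have : Nontrivial ι := Fintype.one_lt_card_iff_nontrivial.mp (by omega)
  obtain ⟨α, β, hαβ⟩ := exists_eq_add_mul_of_collinear hd fun i j k hij hik hjk =>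
    (hM' i j k hij hik hjk).2
  refine Submodule.mem_span_pair.mpr ⟨α, β, ?_⟩
  ext i j
  rcases eq_or_ne i j with rfl | hij
  · simp [hαβ]
  · obtain ⟨k, hki, hkj⟩ := exists_ne_and_ne_of_three_le_card hι i j
    simp [hij, (hM' i j k hij hki.symm hkj.symm).1]

theorem BaseLocusDeterminesPencil.mul_mul_transpose {X Y Q : Matrix ι ι ℂ}
    (h : BaseLocusDeterminesPencil X Y) (hQ : IsUnit Q.det) :
    BaseLocusDeterminesPencil (Q * X * Qᵀ) (Q * Y * Qᵀ) := by
  intro M hM hvan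
  have hQt : IsUnit Qᵀ.det := by rwa [det_transpose]
  set N := Q⁻¹ * M * Q⁻¹ᵀ
  have hN : Q * N * Qᵀ = M := by
    simp only [N, ← Matrix.mul_assoc, mul_nonsing_inv _ hQ, Matrix.one_mul]
    rw [Matrix.mul_assoc, ← transpose_mul, mul_nonsing_inv _ hQ, transpose_one, Matrix.mul_one]
  have hNs : N.IsSymm := by simpa only [transpose_transpose] using hM.transpose_mul_mul_s7 Q⁻¹ᵀ
  have hNvan : ∀ u ∈ baseLocus X Y, u ⬝ᵥ (N *ᵥ u) = 0 := fun u hu => by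
    have hu' : Qᵀ *ᵥ (Qᵀ⁻¹ *ᵥ u) = u := by
      rw [mulVec_mulVec, mul_nonsing_inv _ hQt, one_mulVec]
    have := hvan _ (mem_baseLocus_mul_mul_transpose.mpr (hu'.symm ▸ hu))
    rwa [← hN, dotProduct_mul_mul_transpose_mulVec, hu'] at this
  obtain ⟨α, β, hαβ⟩ := Submodule.mem_span_pair.mp (h N hNs hNvan)
  refine Submodule.mem_span_pair.mpr ⟨α, β, ?_⟩
  rw [← hN, ← hαβ]
  simp only [Matrix.mul_add, Matrix.add_mul, Matrix.mul_smul, Matrix.smul_mul]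

theorem NormalCrossing.baseLocusDeterminesPencil_inv (hι : 3 ≤ Fintype.card ι)
    {A B : Matrix ι ι ℂ} (hAB : NormalCrossing A B) (hAs : A.IsSymm) (hBs : B.IsSymm)
    (hA : IsUnit A.det) (hB : IsUnit B.det) : BaseLocusDeterminesPencil A⁻¹ B⁻¹ := by
  obtain ⟨P, μ, hμ, hPA, hPB⟩ := hAB.exists_simultaneous_diagonalization hAs hBs hA
  have hP : IsUnit P.det := isUnit_det_of_left_inverse hPA
  have hμ0 : ∀ i, μ i ≠ 0 := by
    have h : IsUnit (diagonal μ).det := by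
      rw [← hPB, det_mul, det_mul, det_transpose]
      exact (hP.mul hB).mul hP
    rw [det_diagonal] at h
    simpa using Finset.prod_ne_zero_iff.mp h.ne_zero
  have hμμ : diagonal μ * diagonal μ⁻¹ = 1 := by
    rw [diagonal_mul_diagonal, ← diagonal_one]
    exact congrArg diagonal (funext fun i => mul_inv_cancel₀ (hμ0 i))
  rw [inv_eq_mul_mul_transpose hPA (Matrix.mul_one 1), inv_eq_mul_mul_transpose hPB hμμ]
  exact (baseLocusDeterminesPencil_one_diagonal hι (inv_injective.comp hμ)).mul_mul_transpose hP

end QuadricPencil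

open QuadricPencil in
/-- For `n ≥ 2` and two normal-crossing pairs of smooth quadrics
`{Q_A, Q_B}` and `{Q_C, Q_D}` in `P^n`, the two pairs have the same tangent hyperplanes
iff the pencils of dual quadrics coincide, i.e. `span{A⁻¹, B⁻¹} = span{C⁻¹, D⁻¹}`. -/
theorem same_tangent_hyperplanes_iff_same_dual_pencil
    (n : ℕ) (hn : 2 ≤ n) (A B C D : Matrix (Fin (n+1)) (Fin (n+1)) ℂ)
    (hAs : A.IsSymm) (hBs : B.IsSymm) (hCs : C.IsSymm) (hDs : D.IsSymm)
    (hA : IsUnit A.det) (hB : IsUnit B.det) (hC : IsUnit C.det) (hD : IsUnit D.det)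
    (hncAB : ∀ x : Fin (n+1) → ℂ, x ≠ 0 → x ⬝ᵥ (A *ᵥ x) = 0 → x ⬝ᵥ (B *ᵥ x) = 0 →
      LinearIndependent ℂ ![A *ᵥ x, B *ᵥ x])
    (hncCD : ∀ x : Fin (n+1) → ℂ, x ≠ 0 → x ⬝ᵥ (C *ᵥ x) = 0 → x ⬝ᵥ (D *ᵥ x) = 0 →
      LinearIndependent ℂ ![C *ᵥ x, D *ᵥ x]) :
    ({u : Fin (n+1) → ℂ | u ≠ 0 ∧ u ⬝ᵥ (A⁻¹ *ᵥ u) = 0 ∧ u ⬝ᵥ (B⁻¹ *ᵥ u) = 0} =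
      {u : Fin (n+1) → ℂ | u ≠ 0 ∧ u ⬝ᵥ (C⁻¹ *ᵥ u) = 0 ∧ u ⬝ᵥ (D⁻¹ *ᵥ u) = 0}) ↔
    Submodule.span ℂ ({A⁻¹, B⁻¹} : Set (Matrix (Fin (n+1)) (Fin (n+1)) ℂ)) =
      Submodule.span ℂ ({C⁻¹, D⁻¹} : Set (Matrix (Fin (n+1)) (Fin (n+1)) ℂ)) := by
  have hcard : 3 ≤ Fintype.card (Fin (n+1)) := by rw [Fintype.card_fin]; omega
  have hAB := NormalCrossing.baseLocusDeterminesPencil_inv hcard hncAB hAs hBs hA hB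
  have hCD := NormalCrossing.baseLocusDeterminesPencil_inv hcard hncCD hCs hDs hC hD
  rw [setOf_ne_zero_eq_iff_baseLocus_eq, Set.Subset.antisymm_iff, le_antisymm_iff,
    hCD.span_le_iff hAs.inv hBs.inv, hAB.span_le_iff hCs.inv hDs.inv, and_comm]
end

section
/- Let n ≥ 2 and let a, b, c, d : {0, …, n−1} → ℂ be nonzero scalars such that aᵢ ≠ bᵢ and cᵢ ≠ dᵢ for all i, aᵢb_j ≠ a_jbᵢ and cᵢd_j ≠ c_jdᵢ for all i ≠ j, and a₁ ≠ d₁. Set A = diag(a₀, …, a_{n−1}, −1), B = diag(b₀, …, b_{n−1}, −1), C = diag(c₀, …, c_{n−1}, −1), D = diag(d₀, …, d_{n−1}, −1), and suppose there exist t₁, t₂ ∈ ℂ and nonzero μ₁, μ₂ ∈ ℂ with C⁻¹ = μ₁·(A⁻¹ + t₁·B⁻¹) and D⁻¹ = μ₂·(A⁻¹ + t₂·B⁻¹). Assume moreover the open conditions: a₁(c₁d₀ − c₀d₁) + c₁d₁(c₀ − d₀) ≠ 0, and for every i ∈ {2, …, n}: c₁(a_{i−1}b₀ − a₀b_{i−1})·(d₁(d₀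 − c₀) − a₁d₀) + a₁c₀·(b₀c₁(a_{i−1} − b_{i−1}) + b_{i−1}d₁(b₀ − a₀)) ≠ 0. Let N₁ be the 2×(n+2) matrix over ℂ[x₀, …, xₙ] with first row (2a₀x₀, …, 2a_{n−1}x_{n−1}, −2xₙ, a₀x₀² + … + a_{n−1}x_{n−1}² − xₙ²) and second row (2b₀x₀, …, 2b_{n−1}x_{n−1}, −2xₙ, 0), and let N₂ be the analogous matrix with c, d in place of a, b. Then there exist an invertible 2×2 complex matrix M′ and an (n+2)×(n+2) matrix M″ over ℂ[x₀, …, xₙ] whose top-left (n+1)×(n+1) block is an invertible complex matrix E, whose last-column entries above the bottom row are homogeneous linear forms, whose bottom row is zero except for a nonzero scalar θ ∈ ℂ in the last position, such that M′·N₁ = N₂·M″; that is, the logarithmic bundles of the two pairs of quadrics are isomorphic. -/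
open Matrix

/-- The diagonal matrix `diag(a₀, …, a_{n−1}, −1)`. -/
def quadDiag (n : ℕ) (a : Fin n → ℂ) : Matrix (Fin (n+1)) (Fin (n+1)) ℂ :=
  Matrix.diagonal fun i => if h : (i : ℕ) < n then a ⟨(i : ℕ), h⟩ else -1

/-- Ancona's `2×(n+2)` matrix of a pair of diagonal quadrics: first row
`(2a₀x₀, …, 2a_{n−1}x_{n−1}, −2xₙ, a₀x₀² + … + a_{n−1}x_{n−1}² − xₙ²)`, second row
`(2b₀x₀, …, 2b_{n−1}x_{n−1}, −2xₙ, 0)`. -/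
noncomputable def quadPairN (n : ℕ) (a b : Fin n → ℂ) :
    Matrix (Fin 2) (Fin (n+2)) (MvPolynomial (Fin (n+1)) ℂ) :=
  Matrix.of fun r j =>
    if h : (j : ℕ) < n then
      MvPolynomial.C (2 * (if r = 0 then a ⟨(j : ℕ), h⟩ else b ⟨(j : ℕ), h⟩)) *
        MvPolynomial.X (⟨(j : ℕ), by omega⟩ : Fin (n+1))
    else if (j : ℕ) = n then
      MvPolynomial.C (-2) * MvPolynomial.X (⟨n, by omega⟩ : Fin (n+1))
    else if r = 0 then
      (∑ k : Fin n, MvPolynomial.C (a k) * MvPolynomial.X (Fin.castSucc k) ^ 2) -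
        MvPolynomial.X (Fin.last n) ^ 2
    else 0

/-- The `(n+2)×(n+2)` bundle-map matrix `M″`: top-left `(n+1)×(n+1)` block a constant
matrix `E`, last column above the bottom given by linear forms `fv`, bottom row zero except
for the scalar `θ` in the last position. -/
noncomputable def quadPairM'' (n : ℕ) (E : Matrix (Fin (n+1)) (Fin (n+1)) ℂ)
    (fv : Fin (n+1) → MvPolynomial (Fin (n+1)) ℂ) (θ : ℂ) :
    Matrix (Fin (n+2)) (Fin (n+2)) (MvPolynomial (Fin (n+1)) ℂ) :=
  Matrix.of fun i j =>
    if hi : (i : ℕ) < n + 1 then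
      if hj : (j : ℕ) < n + 1 then MvPolynomial.C (E ⟨(i : ℕ), hi⟩ ⟨(j : ℕ), hj⟩)
      else fv ⟨(i : ℕ), hi⟩
    else if (j : ℕ) < n + 1 then 0 else MvPolynomial.C θ

/-!
Write `A = (a, −1)`, `B`, `C`, `D` for the diagonals of the four quadrics. Cleared of
denominators, the pencil relations say `A_k B_k = μ₁ (B_k + t₁ A_k) C_k` and
`A_k B_k = μ₂ (B_k + t₂ A_k) D_k` for every `k`. Consequently the constant row operation
`M′ = [[t₂, 1], [μ₁t₁/μ₂, μ₁/μ₂]]` sends each gradient column `(A_k, B_k) x_k` of `N₁` to a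
multiple `e_k (C_k, D_k) x_k` of the corresponding column of `N₂`, and the remaining column
`(Σ A_k x_k², 0)` is matched by taking the linear forms `(ν_k / 2) x_k`, where
`ν_k = μ₁ t₁ (B_k + t₂ A_k) / B_k`, and `θ = μ₁ (t₂ − t₁)` in the last column of `M″`.
Both `det M′` and `θ` are multiples of `t₂ − t₁`, which is nonzero because the last diagonal entries of all four quadrics equal `−1` while `c₀ ≠ d₀`.
-/

open MvPolynomial

theorem Matrix.inv_diagonal_of_ne_zero {ι K : Type*} [Fintype ι] [DecidableEq ι] [Field K]
    {v : ι → K} (hv : ∀ i, v i ≠ 0) : (diagonal v)⁻¹ = diagonal fun i => (v i)⁻¹ :=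
  inv_eq_right_inv <| by simp [diagonal_mul_diagonal, hv]

theorem mul_eq_of_inv_eq_pencil {K : Type*} [Field K] {A B C t μ : K} (hA : A ≠ 0) (hB : B ≠ 0)
    (hC : C ≠ 0) (h : C⁻¹ = μ * (A⁻¹ + t * B⁻¹)) : A * B = μ * (B + t * A) * C := by
  field_simp at h
  linear_combination h

theorem param_ne_of_inv_eq_pencil {ι K : Type*} [Field K] {A B C D : ι → K} {t₁ t₂ μ₁ μ₂ : K}
    (hC : ∀ k, (C k)⁻¹ = μ₁ * ((A k)⁻¹ + t₁ * (B k)⁻¹))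
    (hD : ∀ k, (D k)⁻¹ = μ₂ * ((A k)⁻¹ + t₂ * (B k)⁻¹))
    {i j : ι} (hi : C i = D i) (hi₀ : C i ≠ 0) (hj : C j ≠ D j) : t₁ ≠ t₂ := by
  rintro rfl
  have hμ : μ₁ = μ₂ := by
    have h := hC i
    rw [hi, hD i] at h
    have hS : μ₂ * ((A i)⁻¹ + t₁ * (B i)⁻¹) ≠ 0 := by
      rw [← hD i, ← hi]
      exact inv_ne_zero hi₀
    exact (mul_right_cancel₀ (right_ne_zero_of_mul hS) h).symm
  exact hj (inv_injective (by rw [hC, hD, hμ]))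

section Entries

variable {n : ℕ}

def quadCoeffs (a : Fin n → ℂ) : Fin (n+1) → ℂ := Fin.snoc a (-1)

@[simp] theorem quadCoeffs_castSucc (a : Fin n → ℂ) (i : Fin n) :
    quadCoeffs a i.castSucc = a i := Fin.snoc_castSucc ..

@[simp] theorem quadCoeffs_last (a : Fin n → ℂ) : quadCoeffs a (Fin.last n) = -1 :=
  Fin.snoc_last ..

theorem quadCoeffs_ne_zero {a : Fin n → ℂ} (ha : ∀ i, a i ≠ 0) (k : Fin (n+1)) :
    quadCoeffs a k ≠ 0 := by
  induction k using Fin.lastCases <;> simp [ha]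

theorem quadDiag_eq_diagonal (a : Fin n → ℂ) : quadDiag n a = diagonal (quadCoeffs a) := rfl

theorem quadPairN_castSucc (a b : Fin n → ℂ) (r : Fin 2) (j : Fin (n+1)) :
    quadPairN n a b r j.castSucc =
      C (2 * if r = 0 then quadCoeffs a j else quadCoeffs b j) * X j := by
  induction j using Fin.lastCases with
  | last =>
    simp only [quadPairN, of_apply, Fin.val_castSucc, Fin.val_last, lt_self_iff_false,
      dite_false, if_true, quadCoeffs_last, ite_self, mul_neg_one]
    rfl
  | cast i =>
    simp only [quadPairN, of_apply, Fin.val_castSucc, i.is_lt, dite_true, quadCoeffs_castSucc]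
    rfl

theorem quadPairN_last (a b : Fin n → ℂ) (r : Fin 2) :
    quadPairN n a b r (Fin.last (n+1)) =
      if r = 0 then ∑ k, C (quadCoeffs a k) * X k ^ 2 else 0 := by
  simp [quadPairN, Fin.sum_univ_castSucc, sub_eq_add_neg]

variable (E : Matrix (Fin (n+1)) (Fin (n+1)) ℂ) (fv : Fin (n+1) → MvPolynomial (Fin (n+1)) ℂ)
  (θ : ℂ)

theorem quadPairM''_castSucc_castSucc (i j : Fin (n+1)) :
    quadPairM'' n E fv θ i.castSucc j.castSucc = C (E i j) := by
  simp [quadPairM'', Fin.is_le]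

theorem quadPairM''_castSucc_last (i : Fin (n+1)) :
    quadPairM'' n E fv θ i.castSucc (Fin.last (n+1)) = fv i := by
  simp [quadPairM'', Fin.is_le]

theorem quadPairM''_last_castSucc (j : Fin (n+1)) :
    quadPairM'' n E fv θ (Fin.last (n+1)) j.castSucc = 0 := by
  simp [quadPairM'', Fin.is_le]

theorem quadPairM''_last_last :
    quadPairM'' n E fv θ (Fin.last (n+1)) (Fin.last (n+1)) = C θ := by
  simp [quadPairM'']

end Entries

theorem map_C_mul_quadPairN_eq_quadPairN_mul_quadPairM'' {n : ℕ} {a b c d : Fin n → ℂ}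
    (M' : Matrix (Fin 2) (Fin 2) ℂ) (e ν : Fin (n+1) → ℂ) (θ : ℂ)
    (hgrad₀ : ∀ k, M' 0 0 * quadCoeffs a k + M' 0 1 * quadCoeffs b k = e k * quadCoeffs c k)
    (hgrad₁ : ∀ k, M' 1 0 * quadCoeffs a k + M' 1 1 * quadCoeffs b k = e k * quadCoeffs d k)
    (hquad₀ : ∀ k, M' 0 0 * quadCoeffs a k = (ν k + θ) * quadCoeffs c k)
    (hquad₁ : ∀ k, M' 1 0 * quadCoeffs a k = ν k * quadCoeffs d k) :
    M'.map C * quadPairN n a b =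
      quadPairN n c d * quadPairM'' n (diagonal e) (fun k => C (ν k / 2) * X k) θ := by
  refine Matrix.ext fun r j => ?_
  -- the left product elaborates with `CStarMatrix`'s default `HMul` instance, hence `erw`
  erw [mul_apply, mul_apply]
  rw [Fin.sum_univ_two, Fin.sum_univ_castSucc]
  induction j using Fin.lastCases with
  | cast j =>
    simp only [quadPairN_castSucc, quadPairM''_castSucc_castSucc, quadPairM''_last_castSucc,
      diagonal_apply, apply_ite C, map_zero, mul_ite, mul_zero, Finset.sum_ite_eq',
      Finset.mem_univ, if_true, add_zero, map_apply]
    fin_cases r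
    · have h := congrArg (C (σ := Fin (n+1))) (hgrad₀ j)
      simp only [map_add, map_mul] at h
      simp only [Fin.zero_eta, Fin.isValue, if_true, one_ne_zero, if_false, map_mul, map_ofNat]
      linear_combination 2 * X j * h
    · have h := congrArg (C (σ := Fin (n+1))) (hgrad₁ j)
      simp only [map_add, map_mul] at h
      simp only [Fin.mk_one, Fin.isValue, one_ne_zero, if_false, map_mul, map_ofNat]
      linear_combination 2 * X j * h
  | last =>
    simp only [quadPairN_castSucc, quadPairN_last, quadPairM''_castSucc_last,
      quadPairM''_last_last, map_apply]
    have hν : ∀ k, (2 : MvPolynomial (Fin (n+1)) ℂ) * C (ν k / 2) = C (ν k) := fun k => by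
      rw [← map_ofNat C 2, ← map_mul, mul_div_cancel₀ _ two_ne_zero]
    fin_cases r
    · simp only [Fin.zero_eta, Fin.isValue, if_true, one_ne_zero, if_false, mul_zero, add_zero,
        Finset.mul_sum, Finset.sum_mul, ← Finset.sum_add_distrib, map_mul, map_ofNat]
      refine Finset.sum_congr rfl fun k _ => ?_
      have h := congrArg (C (σ := Fin (n+1))) (hquad₀ k)
      simp only [map_add, map_mul] at h
      linear_combination X k ^ 2 * h - C (quadCoeffs c k) * X k ^ 2 * hν k
    · simp only [Fin.mk_one, Fin.isValue, if_true, one_ne_zero, if_false, mul_zero, add_zero,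
        zero_mul, Finset.mul_sum, map_mul, map_ofNat]
      refine Finset.sum_congr rfl fun k _ => ?_
      have h := congrArg (C (σ := Fin (n+1))) (hquad₁ k)
      simp only [map_mul] at h
      linear_combination X k ^ 2 * h - C (quadCoeffs d k) * X k ^ 2 * hν k

theorem inv_quadCoeffs_eq_of_inv_quadDiag_eq {n : ℕ} {a b c : Fin n → ℂ} {t μ : ℂ}
    (ha : ∀ i, a i ≠ 0) (hb : ∀ i, b i ≠ 0) (hc : ∀ i, c i ≠ 0)
    (h : (quadDiag n c)⁻¹ = μ • ((quadDiag n a)⁻¹ + t • (quadDiag n b)⁻¹)) (k : Fin (n+1)) :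
    (quadCoeffs c k)⁻¹ = μ * ((quadCoeffs a k)⁻¹ + t * (quadCoeffs b k)⁻¹) := by
  rw [quadDiag_eq_diagonal, quadDiag_eq_diagonal, quadDiag_eq_diagonal,
    inv_diagonal_of_ne_zero (quadCoeffs_ne_zero ha),
    inv_diagonal_of_ne_zero (quadCoeffs_ne_zero hb),
    inv_diagonal_of_ne_zero (quadCoeffs_ne_zero hc)] at h
  simpa using congrFun (congrFun h k) k

theorem exists_log_bundle_iso_of_inv_eq_pencil {n : ℕ} {a b c d : Fin n → ℂ} {t₁ t₂ μ₁ μ₂ : ℂ}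
    (hμ₁ : μ₁ ≠ 0) (hμ₂ : μ₂ ≠ 0) (ht : t₁ ≠ t₂)
    (ha : ∀ i, a i ≠ 0) (hb : ∀ i, b i ≠ 0) (hc : ∀ i, c i ≠ 0) (hd : ∀ i, d i ≠ 0)
    (hC : ∀ k, (quadCoeffs c k)⁻¹ = μ₁ * ((quadCoeffs a k)⁻¹ + t₁ * (quadCoeffs b k)⁻¹))
    (hD : ∀ k, (quadCoeffs d k)⁻¹ = μ₂ * ((quadCoeffs a k)⁻¹ + t₂ * (quadCoeffs b k)⁻¹)) :
    ∃ M' : Matrix (Fin 2) (Fin 2) ℂ, IsUnit M'.det ∧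
      ∃ E : Matrix (Fin (n+1)) (Fin (n+1)) ℂ, IsUnit E.det ∧
      ∃ fv : Fin (n+1) → MvPolynomial (Fin (n+1)) ℂ, (∀ i, (fv i).IsHomogeneous 1) ∧
      ∃ θ : ℂ, θ ≠ 0 ∧
        M'.map MvPolynomial.C * quadPairN n a b = quadPairN n c d * quadPairM'' n E fv θ := by
  have hA := quadCoeffs_ne_zero ha
  have hB := quadCoeffs_ne_zero hb
  have hC₀ := quadCoeffs_ne_zero hc
  have hD₀ := quadCoeffs_ne_zero hd
  have hC' k := mul_eq_of_inv_eq_pencil (hA k) (hB k) (hC₀ k) (hC k)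
  have hD' k := mul_eq_of_inv_eq_pencil (hA k) (hB k) (hD₀ k) (hD k)
  have hBA k : quadCoeffs b k + t₂ * quadCoeffs a k ≠ 0 := by
    intro h
    have := hD' k
    rw [h, mul_zero, zero_mul] at this
    exact mul_ne_zero (hA k) (hB k) this
  set e : Fin (n+1) → ℂ := fun k => (quadCoeffs b k + t₂ * quadCoeffs a k) / quadCoeffs c k
  set ν : Fin (n+1) → ℂ :=
    fun k => μ₁ * t₁ * (quadCoeffs b k + t₂ * quadCoeffs a k) / quadCoeffs b k
  refine ⟨!![t₂, 1; μ₁ * t₁ / μ₂, μ₁ / μ₂], ?_, diagonal e, ?_, fun k => C (ν k / 2) * X k, ?_,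
    μ₁ * (t₂ - t₁), mul_ne_zero hμ₁ (sub_ne_zero.2 ht.symm),
    map_C_mul_quadPairN_eq_quadPairN_mul_quadPairM'' _ e ν _ ?_ ?_ ?_ ?_⟩
  · rw [det_fin_two_of, isUnit_iff_ne_zero,
      show t₂ * (μ₁ / μ₂) - 1 * (μ₁ * t₁ / μ₂) = μ₁ * (t₂ - t₁) / μ₂ by ring]
    exact div_ne_zero (mul_ne_zero hμ₁ (sub_ne_zero.2 ht.symm)) hμ₂
  · rw [det_diagonal, isUnit_iff_ne_zero, Finset.prod_ne_zero_iff]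
    exact fun k _ => div_ne_zero (hBA k) (hC₀ k)
  · intro k
    simpa using (isHomogeneous_C _ (ν k / 2)).mul (isHomogeneous_X _ k)
  · intro k
    simp only [Fin.isValue, of_apply, cons_val', cons_val_zero, cons_val_fin_one, cons_val_one,
      one_mul, e]
    field_simp [hC₀ k]
    ring
  · intro k
    simp only [Fin.isValue, of_apply, cons_val', cons_val_zero, cons_val_fin_one, cons_val_one,
      e]
    field_simp [hC₀ k]
    linear_combination hD' k - hC' k
  · intro k
    simp only [Fin.isValue, of_apply, cons_val', cons_val_zero, cons_val_fin_one, ν]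
    field_simp [hB k]
    linear_combination t₂ * hC' k
  · intro k
    simp only [Fin.isValue, of_apply, cons_val', cons_val_zero, cons_val_fin_one, cons_val_one,
      ν]
    field_simp [hB k]
    linear_combination t₁ * hD' k

/-- If the dual quadrics of a normal-crossing pair `(C,D)` of diagonal
quadrics lie in the pencil generated by the dual quadrics of `(A,B)` (same tangent
hyperplanes) and the stated open genericity conditions hold, then the logarithmic bundles
of the two pairs are isomorphic: there is a commutative diagram `M′·N₁ = N₂·M″` with `M′`
an invertible constant `2×2` matrix and `M″` of the displayed invertible shape. -/
theorem same_tangent_hyperplanes_implies_log_bundle_iso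
    (n : ℕ) (hn : 2 ≤ n) (a b c d : Fin n → ℂ)
    (ha : ∀ i, a i ≠ 0) (hb : ∀ i, b i ≠ 0) (hc : ∀ i, c i ≠ 0) (hd : ∀ i, d i ≠ 0)
    (hcd : ∀ i, c i ≠ d i)
    (hdual : ∃ t₁ t₂ μ₁ μ₂ : ℂ, μ₁ ≠ 0 ∧ μ₂ ≠ 0 ∧
      (quadDiag n c)⁻¹ = μ₁ • ((quadDiag n a)⁻¹ + t₁ • (quadDiag n b)⁻¹) ∧
      (quadDiag n d)⁻¹ = μ₂ • ((quadDiag n a)⁻¹ + t₂ • (quadDiag n b)⁻¹)) :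
    ∃ M' : Matrix (Fin 2) (Fin 2) ℂ, IsUnit M'.det ∧
      ∃ E : Matrix (Fin (n+1)) (Fin (n+1)) ℂ, IsUnit E.det ∧
      ∃ fv : Fin (n+1) → MvPolynomial (Fin (n+1)) ℂ, (∀ i, (fv i).IsHomogeneous 1) ∧
      ∃ θ : ℂ, θ ≠ 0 ∧
        M'.map MvPolynomial.C * quadPairN n a b = quadPairN n c d * quadPairM'' n E fv θ := by
  obtain ⟨t₁, t₂, μ₁, μ₂, hμ₁, hμ₂, hC, hD⟩ := hdual
  have hC' := inv_quadCoeffs_eq_of_inv_quadDiag_eq ha hb hc hC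
  have hD' := inv_quadCoeffs_eq_of_inv_quadDiag_eq ha hb hd hD
  have ht : t₁ ≠ t₂ :=
    param_ne_of_inv_eq_pencil hC' hD' (i := Fin.last n) (j := Fin.castSucc ⟨0, by omega⟩)
      (by simp) (by simp) (by rw [quadCoeffs_castSucc, quadCoeffs_castSucc]; exact hcd _)
  exact exists_log_bundle_iso_of_inv_eq_pencil hμ₁ hμ₂ ht ha hb hc hd hC' hD'
end
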